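/- arXiv:2501.03961 — 12 statements merged into one kernel-verified Lean document; each statement's English description precedes it below -/
import Mathlib

section
/- Let q be a prime power and F_q the field with q elements. Let α ≥ 2, h ≥ 1, ℓ ≥ 1, t ≥ 1 and ε ≥ 0 be integers with h − ε ≥ 2ℓ. Let T be a finite collection of linear subspaces of F_q^{(h−ε)t} containing at least α subspaces, such that (i) every subspace in T has dimension at most ℓt, and (ii) any α distinct subspaces from T together span F_q^{(h−ε)t}. Then αℓ ≥ h − ε, and |T| ≤ (⌊(h−ε)/ℓ⌋ − 2) + (α − ⌊(h−ε)/ℓ⌋ + 1)·(q^{ℓt+1} − 1)/(q − 1). -/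
/-!
A dimension count shows that α members of `T` span at most `αℓt` dimensions, whence `h - ε ≤ αℓ`.
For the size bound put `m = ⌊(h - ε)/ℓ⌋`, take `m - 2` members `S` of `T` and enlarge their span
to a subspace `U` of codimension `ℓt + 1`. Every other member `W` lies, together with `U`, in a
hyperplane, i.e. in the kernel of a point of the projective space `ℙ(U⁰)`, which has
`(q^(ℓt+1) - 1)/(q - 1)` points. A hyperplane through `U` contains at most `α - m + 1` members of
`T \ S`: any `α - m + 2` of them, together with `S`, would be `α` members of `T` spanning everything.
-/

open Module Finset
open scoped LinearAlgebra.Projectivization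

section

variable {K V : Type*} [Field K] [AddCommGroup V] [Module K V]

namespace Submodule

theorem finrank_finset_sup_le_sum [FiniteDimensional K V] (S : Finset (Submodule K V)) :
    finrank K ↥(S.sup id) ≤ ∑ W ∈ S, finrank K W := by
  classical
  induction S using Finset.induction_on with
  | empty => simp
  | insert W S hW ih =>
    rw [sup_insert, sum_insert hW]
    exact (finrank_add_le_finrank_add_finrank _ _).trans (Nat.add_le_add_left ih _)

theorem finrank_finset_sup_le_card_mul [FiniteDimensional K V] {S : Finset (Submodule K V)}
    {d : ℕ} (hdim : ∀ W ∈ S, finrank K W ≤ d) : finrank K ↥(S.sup id) ≤ #S * d :=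
  calc finrank K ↥(S.sup id) ≤ ∑ W ∈ S, finrank K W := finrank_finset_sup_le_sum S
    _ ≤ ∑ _W ∈ S, d := sum_le_sum hdim
    _ = #S * d := by rw [sum_const, smul_eq_mul]

theorem exists_le_finrank_eq [FiniteDimensional K V] (p : Submodule K V) {k : ℕ}
    (hpk : finrank K p ≤ k) (hk : k ≤ finrank K V) :
    ∃ q : Submodule K V, p ≤ q ∧ finrank K q = k := by
  induction k with
  | zero => exact ⟨p, le_rfl, Nat.le_zero.mp hpk⟩
  | succ k ih =>
    rcases hpk.eq_or_lt with hpk | hpk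
    · exact ⟨p, le_rfl, hpk⟩
    obtain ⟨q, hpq, hq⟩ := ih (by omega) (by omega)
    obtain ⟨v, -, hv⟩ := SetLike.exists_of_lt (lt_top_of_finrank_lt_finrank (hq ▸ hk))
    exact ⟨q ⊔ span K {v}, hpq.trans le_sup_left, by rw [finrank_sup_span_singleton hv, hq]⟩

end Submodule

namespace Projectivization

variable {U : Submodule K V}

theorem le_ker_rep (p : ℙ K U.dualAnnihilator) :
    U ≤ LinearMap.ker (p.rep : Dual K V) := fun x hx =>
  (Submodule.mem_dualAnnihilator _).1 p.rep.2 x hx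

theorem ker_rep_ne_top (p : ℙ K U.dualAnnihilator) :
    LinearMap.ker (p.rep : Dual K V) ≠ ⊤ := by
  rw [Ne, LinearMap.ker_eq_top]
  exact fun h => p.rep_nonzero (Subtype.ext h)

end Projectivization

theorem Submodule.exists_le_ker_rep_of_sup_ne_top [FiniteDimensional K V] {U W : Submodule K V}
    (hUW : U ⊔ W ≠ ⊤) : ∃ p : ℙ K U.dualAnnihilator, W ≤ LinearMap.ker (p.rep : Dual K V) := by
  obtain ⟨f, hf, hf0⟩ := (Submodule.ne_bot_iff _).1
    (mt Submodule.dualAnnihilator_eq_bot_iff.1 hUW)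
  rw [dualAnnihilator_sup_eq] at hf
  set v : U.dualAnnihilator := ⟨f, hf.1⟩
  have hv : v ≠ 0 := by simpa [v] using hf0
  obtain ⟨a, ha⟩ := Projectivization.exists_smul_eq_mk_rep K v hv
  refine ⟨Projectivization.mk K v hv, fun x hx => ?_⟩
  rw [LinearMap.mem_ker, ← ha]
  simp [v, (Submodule.mem_dualAnnihilator f).1 hf.2 x hx]

namespace Submodule

variable [FiniteDimensional K V]

theorem card_le_card_projectivization_mul [Finite K] (U : Submodule K V)
    (T : Finset (Submodule K V)) {k : ℕ} (hT : ∀ W ∈ T, U ⊔ W ≠ ⊤)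
    (hspan : ∀ R ⊆ T, #R = k → U ⊔ R.sup id = ⊤) :
    #T ≤ Nat.card (ℙ K U.dualAnnihilator) * (k - 1) := by
  classical
  have : Finite (Dual K V) := Module.finite_of_finite K
  have : Fintype (ℙ K U.dualAnnihilator) := Fintype.ofFinite _
  let onHyperplane (p : ℙ K U.dualAnnihilator) : Finset (Submodule K V) :=
    {W ∈ T | W ≤ LinearMap.ker (p.rep : Dual K V)}
  have hfiber (p : ℙ K U.dualAnnihilator) : #(onHyperplane p) ≤ k - 1 := by
    by_contra! h
    obtain ⟨R, hR, hRcard⟩ := exists_subset_card_eq (show k ≤ #(onHyperplane p) by omega)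
    apply p.ker_rep_ne_top
    rw [eq_top_iff, ← hspan R (hR.trans (filter_subset _ _)) hRcard]
    exact sup_le p.le_ker_rep (Finset.sup_le fun W hW => (mem_filter.1 (hR hW)).2)
  have hcover : T ⊆ univ.biUnion onHyperplane := fun W hW => by
    obtain ⟨p, hp⟩ := exists_le_ker_rep_of_sup_ne_top (hT W hW)
    exact mem_biUnion.2 ⟨p, mem_univ p, mem_filter.2 ⟨hW, hp⟩⟩
  calc #T ≤ #(univ.biUnion onHyperplane) := card_le_card hcover
    _ ≤ #(univ : Finset (ℙ K U.dualAnnihilator)) * (k - 1) :=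
      card_biUnion_le_card_mul _ _ _ fun p _ => hfiber p
    _ = Nat.card (ℙ K U.dualAnnihilator) * (k - 1) := by rw [card_univ, Nat.card_eq_fintype_card]

variable {T : Finset (Submodule K V)} {α d : ℕ}

theorem finrank_le_mul_of_forall_finset_sup_eq_top (hT : α ≤ #T)
    (hdim : ∀ W ∈ T, finrank K W ≤ d) (hspan : ∀ U ⊆ T, #U = α → U.sup id = ⊤) :
    finrank K V ≤ α * d := by
  obtain ⟨U, hUT, hU⟩ := exists_subset_card_eq hT
  rw [← finrank_top K V, ← hspan U hUT hU, ← hU]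
  exact finrank_finset_sup_le_card_mul fun W hW => hdim W (hUT hW)

theorem card_le_of_forall_finset_sup_eq_top [Finite K] {s : ℕ} (hT : α ≤ #T)
    (hdim : ∀ W ∈ T, finrank K W ≤ d) (hspan : ∀ U ⊆ T, #U = α → U.sup id = ⊤)
    (hsd : (s + 1) * d < finrank K V) :
    #T ≤ s + (α - s - 1) * ((Nat.card K ^ (d + 1) - 1) / (Nat.card K - 1)) := by
  classical
  have hsα : s + 1 < α := Nat.lt_of_mul_lt_mul_right
    (hsd.trans_le (finrank_le_mul_of_forall_finset_sup_eq_top hT hdim hspan))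
  obtain ⟨S, hST, hS⟩ := exists_subset_card_eq (show s ≤ #T by omega)
  have hSdim : finrank K ↥(S.sup id) ≤ s * d :=
    hS ▸ finrank_finset_sup_le_card_mul fun W hW => hdim W (hST hW)
  rw [add_one_mul] at hsd
  obtain ⟨U, hSU, hU⟩ :=
    (S.sup id).exists_le_finrank_eq (k := finrank K V - (d + 1)) (by omega) (by omega)
  have hUdual : finrank K U.dualAnnihilator = d + 1 := by
    have := Subspace.finrank_add_finrank_dualAnnihilator_eq U
    omega
  have hproper : ∀ W ∈ T \ S, U ⊔ W ≠ ⊤ := fun W hW =>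
    (lt_top_of_finrank_lt_finrank <| (finrank_add_le_finrank_add_finrank U W).trans_lt <| by
      have := hdim W (mem_sdiff.1 hW).1
      omega).ne
  have hspan' : ∀ R ⊆ T \ S, #R = α - s → U ⊔ R.sup id = ⊤ := fun R hR hRcard => by
    have hdisj : Disjoint S R := disjoint_of_subset_right hR disjoint_sdiff
    have hSR := hspan (S ∪ R) (union_subset hST (hR.trans sdiff_subset))
      (by rw [card_union_of_disjoint hdisj, hS, hRcard]; omega)
    rw [eq_top_iff, ← hSR, sup_union]
    exact sup_le_sup_right hSU _
  have hcount := card_le_card_projectivization_mul U (T \ S) hproper hspan'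
  rw [Projectivization.card'', natCard_eq_pow_finrank (K := K), hUdual] at hcount
  have := card_sdiff_add_card_eq_card hST
  rw [mul_comm] at hcount
  omega

end Submodule

end

theorem stmt_1_general (F : Type*) [Field F] [Fintype F]
    (α h ℓ t ε : ℕ) (hℓ : 1 ≤ ℓ) (ht : 1 ≤ t)
    (hhe : 2 * ℓ ≤ h - ε)
    (T : Finset (Submodule F (Fin ((h - ε) * t) → F)))
    (hTcard : α ≤ T.card)
    (hdim : ∀ W ∈ T, Module.finrank F W ≤ ℓ * t)
    (hspan : ∀ U : Finset (Submodule F (Fin ((h - ε) * t) → F)),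
      U ⊆ T → U.card = α → U.sup id = ⊤) :
    h - ε ≤ α * ℓ ∧
      T.card ≤ ((h - ε) / ℓ - 2) +
        (α - (h - ε) / ℓ + 1) *
          ((Fintype.card F ^ (ℓ * t + 1) - 1) / (Fintype.card F - 1)) := by
  have hn : finrank F (Fin ((h - ε) * t) → F) = (h - ε) * t := by simp
  have hspanning := Submodule.finrank_le_mul_of_forall_finset_sup_eq_top hTcard hdim hspan
  rw [hn, ← mul_assoc] at hspanning
  have hαℓ : h - ε ≤ α * ℓ := Nat.le_of_mul_le_mul_right hspanning ht
  refine ⟨hαℓ, ?_⟩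
  set m := (h - ε) / ℓ
  have hm : 2 ≤ m := (Nat.le_div_iff_mul_le hℓ).2 hhe
  have hmα : m ≤ α := Nat.div_le_of_le_mul (mul_comm α ℓ ▸ hαℓ)
  have hsd : (m - 2 + 1) * (ℓ * t) < finrank F (Fin ((h - ε) * t) → F) := by
    rw [hn, ← mul_assoc]
    refine Nat.mul_lt_mul_of_pos_right ?_ ht
    calc (m - 2 + 1) * ℓ < m * ℓ := Nat.mul_lt_mul_of_pos_right (by omega) hℓ
      _ ≤ h - ε := Nat.div_mul_le_self _ _
  have hcard := Submodule.card_le_of_forall_finset_sup_eq_top hTcard hdim hspan hsd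
  rwa [← Fintype.card_eq_nat_card, show α - (m - 2) - 1 = α - m + 1 by omega] at hcard

/-- Upper bound on the size of a collection of subspaces of
`F_q^{(h-ε)t}`, each of dimension at most `ℓt`, any `α` of which span the whole space. -/
theorem stmt_1 (F : Type*) [Field F] [Fintype F]
    (α h ℓ t ε : ℕ) (hα : 2 ≤ α) (hh : 1 ≤ h) (hℓ : 1 ≤ ℓ) (ht : 1 ≤ t)
    (hhe : 2 * ℓ ≤ h - ε)
    (T : Finset (Submodule F (Fin ((h - ε) * t) → F)))
    (hTcard : α ≤ T.card)
    (hdim : ∀ W ∈ T, Module.finrank F W ≤ ℓ * t)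
    (hspan : ∀ U : Finset (Submodule F (Fin ((h - ε) * t) → F)),
      U ⊆ T → U.card = α → U.sup id = ⊤) :
    h - ε ≤ α * ℓ ∧
      T.card ≤ ((h - ε) / ℓ - 2) +
        (α - (h - ε) / ℓ + 1) *
          ((Fintype.card F ^ (ℓ * t + 1) - 1) / (Fintype.card F - 1)) :=
  stmt_1_general F α h ℓ t ε hℓ ht hhe T hTcard hdim hspan
end

section
/- Let q be a prime power and F_q the field with q elements, and let h, ℓ, t ≥ 1 and ε ≥ 0 be integers with ℓ + ε < h ≤ 2ℓ + ε. Let S be a finite collection of linear subspaces of F_q^{ht} such that every subspace in S has dimension at most ℓt and the sum of any two distinct subspaces of S has dimension at least (h−ε)t. Then, with u := 2ℓt − (h−ε)t + 1 (which satisfies 1 ≤ u ≤ ℓt), one has |S| · G_q(ℓt, u) ≤ G_q(ht, u); equivalently |S| ≤ [ht choose u]_q / [ℓt choose u]_q. -/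
open Module Submodule

noncomputable def gaussBinom (F : Type*) [Field F] [Fintype F] (n k : ℕ) : ℕ :=
  Nat.card {W : Submodule F (Fin n → F) // Module.finrank F W = k}

lemma aux_ext {F V : Type*} [Field F] [AddCommGroup V] [Module F V] [FiniteDimensional F V]
    (W : Submodule F V) (m : ℕ) (h1 : finrank F W ≤ m) (h2 : m ≤ finrank F V) :
    ∃ W' : Submodule F V, W ≤ W' ∧ finrank F W' = m := by
  obtain ⟨k, hk⟩ : ∃ k, m - finrank F W = k := ⟨_, rfl⟩
  induction k generalizing W with
  | zero => exact ⟨W, le_rfl, by omega⟩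
  | succ k ih =>
    have hlt : finrank F W < finrank F V := by omega
    obtain ⟨x, hx⟩ := W.exists_of_finrank_lt hlt
    have hxW : x ∉ W := by simpa using hx 1 one_ne_zero
    have hx0 : x ≠ 0 := by rintro rfl; exact hxW W.zero_mem
    have hinf : W ⊓ (F ∙ x) = ⊥ := by
      rw [eq_bot_iff]
      rintro y hy
      rw [Submodule.mem_inf] at hy
      obtain ⟨r, rfl⟩ := Submodule.mem_span_singleton.mp hy.2
      rcases eq_or_ne r 0 with rfl | hr
      · simp
      · exact absurd hy.1 (hx r hr)
    have hrank : finrank F ↥(W ⊔ (F ∙ x)) = finrank F W + 1 := by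
      have hq := Submodule.finrank_sup_add_finrank_inf_eq W (F ∙ x)
      rw [hinf, finrank_bot, finrank_span_singleton hx0] at hq
      omega
    obtain ⟨W', hle, hW'⟩ := ih (W ⊔ (F ∙ x)) (by omega) (by omega)
    exact ⟨W', le_sup_left.trans hle, hW'⟩

lemma aux_count {F : Type*} [Field F] [Fintype F] {n m u : ℕ}
    (P : Submodule F (Fin n → F)) (hP : finrank F P = m) :
    Nat.card {U : Submodule F (Fin n → F) // finrank F U = u ∧ U ≤ P} = gaussBinom F m u := by
  have g : ↥P ≃ₗ[F] (Fin m → F) :=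
    LinearEquiv.ofFinrankEq _ _ (by rw [hP, Module.finrank_fin_fun])
  have e0 : {Q : Submodule F ↥P // finrank F Q = u} ≃
      {U : Submodule F (Fin n → F) // finrank F U = u ∧ U ≤ P} :=
    { toFun := fun Q => ⟨Q.1.map P.subtype,
        (Submodule.finrank_map_subtype_eq P Q.1).trans Q.2, Submodule.map_subtype_le P Q.1⟩
      invFun := fun U => ⟨U.1.comap P.subtype, by
        have hmc : (U.1.comap P.subtype).map P.subtype = U.1 := by
          rw [Submodule.map_comap_eq, Submodule.range_subtype, inf_eq_right.mpr U.2.2]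
        rw [← Submodule.finrank_map_subtype_eq P, hmc]; exact U.2.1⟩
      left_inv := fun Q => Subtype.ext
        (Submodule.comap_map_eq_of_injective (Submodule.injective_subtype P) Q.1)
      right_inv := fun U => Subtype.ext (by
        simp only
        rw [Submodule.map_comap_eq, Submodule.range_subtype, inf_eq_right.mpr U.2.2]) }
  have e2 : {Q : Submodule F ↥P // finrank F Q = u} ≃
      {Q : Submodule F (Fin m → F) // finrank F Q = u} :=
    Equiv.subtypeEquiv (Submodule.orderIsoMapComap g).toEquiv (fun Q => by
      show finrank F ↥Q = u ↔ finrank F ↥(Q.map (g : ↥P →ₗ[F] (Fin m → F))) = u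
      constructor <;> intro hq
      · rw [← hq]; exact LinearEquiv.finrank_map_eq g Q
      · rw [← hq]; exact (LinearEquiv.finrank_map_eq g Q).symm)
  rw [gaussBinom, ← Nat.card_congr e2, Nat.card_congr e0]

/-- Upper bound for collections of subspaces of `F_q^{ht}` of
dimension at most `ℓt`, any two distinct of which sum to dimension at least `(h-ε)t`. -/
theorem stmt_3 (F : Type*) [Field F] [Fintype F]
    (h ℓ t ε : ℕ) (hh : 1 ≤ h) (hℓ : 1 ≤ ℓ) (ht : 1 ≤ t)
    (hlow : ℓ + ε < h) (hhigh : h ≤ 2 * ℓ + ε)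
    (S : Finset (Submodule F (Fin (h * t) → F)))
    (hdim : ∀ W ∈ S, Module.finrank F W ≤ ℓ * t)
    (hsum : ∀ W₁ ∈ S, ∀ W₂ ∈ S, W₁ ≠ W₂ →
      (h - ε) * t ≤ Module.finrank F ↥(W₁ ⊔ W₂)) :
    1 ≤ 2 * ℓ * t - (h - ε) * t + 1 ∧
      2 * ℓ * t - (h - ε) * t + 1 ≤ ℓ * t ∧
      S.card * gaussBinom F (ℓ * t) (2 * ℓ * t - (h - ε) * t + 1) ≤
        gaussBinom F (h * t) (2 * ℓ * t - (h - ε) * t + 1) := by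
  classical
  set a := ℓ * t with ha
  set d := (h - ε) * t with hd
  have hda : a + t ≤ d := by
    have : ℓ + 1 ≤ h - ε := by omega
    calc a + t = (ℓ + 1) * t := by ring
    _ ≤ (h - ε) * t := Nat.mul_le_mul_right t this
  have hd2a : d ≤ 2 * a := by
    have : h - ε ≤ 2 * ℓ := by omega
    calc d ≤ 2 * ℓ * t := Nat.mul_le_mul_right t this
    _ = 2 * a := by ring
  have h2a : 2 * ℓ * t = 2 * a := by ring
  rw [h2a]
  set u := 2 * a - d + 1 with hu
  refine ⟨by omega, by omega, ?_⟩
  -- extend each W ∈ S to dimension a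
  have hah : a ≤ h * t := Nat.mul_le_mul_right t (by omega)
  have hVrank : finrank F (Fin (h * t) → F) = h * t := Module.finrank_fin_fun F
  have hext : ∀ W ∈ S, ∃ W' : Submodule F (Fin (h * t) → F),
      W ≤ W' ∧ finrank F W' = a := fun W hW =>
    aux_ext W a (hdim W hW) (by rw [hVrank]; exact hah)
  choose! E hE1 hE2 using hext
  haveI : Fintype (Submodule F (Fin (h * t) → F)) := Fintype.ofFinite _
  set B : Submodule F (Fin (h * t) → F) → Finset (Submodule F (Fin (h * t) → F)) :=
    fun W => Finset.univ.filter (fun U => finrank F U = u ∧ U ≤ E W) with hB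
  have hcardB : ∀ W ∈ S, (B W).card = gaussBinom F a u := by
    intro W hW
    rw [hB]
    rw [← Fintype.card_subtype, ← Nat.card_eq_fintype_card]
    exact aux_count (E W) (hE2 W hW)
  have hdisj : ∀ W₁ ∈ S, ∀ W₂ ∈ S, W₁ ≠ W₂ → Disjoint (B W₁) (B W₂) := by
    intro W₁ h₁ W₂ h₂ hne
    rw [Finset.disjoint_left]
    intro U hU1 hU2
    simp only [hB, Finset.mem_filter] at hU1 hU2
    have hle : U ≤ E W₁ ⊓ E W₂ := le_inf hU1.2.2 hU2.2.2
    have hsup : d ≤ finrank F ↥(E W₁ ⊔ E W₂) := by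
      refine le_trans (hsum W₁ h₁ W₂ h₂ hne) ?_
      exact Submodule.finrank_mono (sup_le_sup (hE1 W₁ h₁) (hE1 W₂ h₂))
    have hq := Submodule.finrank_sup_add_finrank_inf_eq (E W₁) (E W₂)
    rw [hE2 W₁ h₁, hE2 W₂ h₂] at hq
    have hUinf : finrank F U ≤ finrank F ↥(E W₁ ⊓ E W₂) := Submodule.finrank_mono hle
    rw [hU1.2.1] at hUinf
    omega
  calc S.card * gaussBinom F a u = ∑ W ∈ S, (B W).card := by
        rw [Finset.sum_congr rfl hcardB, Finset.sum_const, smul_eq_mul]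
      _ = (S.biUnion B).card := (Finset.card_biUnion hdisj).symm
      _ ≤ (Finset.univ.filter (fun U : Submodule F (Fin (h * t) → F) =>
            finrank F U = u)).card := by
        apply Finset.card_le_card
        intro U hU
        rw [Finset.mem_biUnion] at hU
        obtain ⟨W, hW, hUW⟩ := hU
        simp only [hB, Finset.mem_filter] at hUW ⊢
        exact ⟨Finset.mem_univ U, hUW.2.1⟩
      _ = gaussBinom F (h * t) u := by
        rw [gaussBinom, Nat.card_eq_fintype_card, Fintype.card_subtype]
end

section
/- Let q be a prime power and F_q the field with q elements, and let n, k, δ, α be positive integers with 1 ≤ δ ≤ k, k + δ ≤ n and α ≥ 2. Set K = max{k, n−k} · (min{k, n−k} − δ + 1). Then there exists a family W₁, …, W_N (repetitions allowed) of N = (α − 1)·q^K linear subspaces of F_q^n, each of dimension k, such that for any α distinct indices i₁ < ⋯ < i_α the subspaces W_{i₁}, …, W_{i_α} together span a subspace of dimension at least δ + k. In particular, the maximum size B_q(n,k,δ;α) of an α-(n,k,δ)_q^c covering Grassmannian code satisfies B_q(n,k,δ;α) ≥ (α−1)·q^{max{k,n−k}(min{k,n−k}−δ+1)}. -/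
/-!
Write `m = n - k`. A Gabidulin code gives `q ^ (max k m * (min k m - δ + 1))` matrices in
`F^{m×k}` whose pairwise differences have rank at least `δ`: for `a ≤ b`, identify `F^b` with
`𝔽_{q^b}` and restrict the `q`-linearized maps `x ↦ ∑_{i<t} cᵢ x^{q^i}`, `t = a - δ + 1`, to an
`a`-dimensional subspace. A nonzero such map is a polynomial of degree at most `q^{t-1}`, so its
kernel has at most `q^{t-1}` elements, i.e. dimension at most `t - 1`.

The graphs of these matrices are `k`-dimensional subspaces of `F^k × F^m = F^n`, and the span of
the graphs of `A` and `B` contains the graph of `A` and `0 × range (A - B)`, which meet trivially;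
so it has dimension at least `k + δ`. Listing every graph `α - 1` times, any `α` indices contain
two different codewords.
-/

open Polynomial Module

section Linearized

variable {L : Type*} [Field L] {t : ℕ}

noncomputable def linearizedPoly (q : ℕ) (c : Fin t → L) : L[X] :=
  ∑ i, C (c i) * X ^ q ^ (i : ℕ)

theorem coeff_linearizedPoly_pow {q : ℕ} (hq : 1 < q) (c : Fin t → L) (j : Fin t) :
    (linearizedPoly q c).coeff (q ^ (j : ℕ)) = c j := by
  rw [linearizedPoly, finsetSum_coeff, Finset.sum_eq_single j]
  · simp
  · intro i _ hij
    rw [coeff_C_mul_X_pow, if_neg fun h => hij (Fin.ext (Nat.pow_right_injective hq h).symm)]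
  · simp

theorem linearizedPoly_ne_zero {q : ℕ} (hq : 1 < q) {c : Fin t → L} (hc : c ≠ 0) :
    linearizedPoly q c ≠ 0 := by
  obtain ⟨j, hj⟩ := Function.ne_iff.mp hc
  exact fun h => hj (by simpa [h] using (coeff_linearizedPoly_pow hq c j).symm)

theorem natDegree_linearizedPoly_le {q : ℕ} (hq : 0 < q) (c : Fin t → L) :
    (linearizedPoly q c).natDegree ≤ q ^ (t - 1) := by
  refine natDegree_sum_le_of_forall_le _ _ fun i _ => ?_
  exact (natDegree_C_mul_X_pow_le _ _).trans (Nat.pow_le_pow_right hq (by omega))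

variable (F : Type*) [Field F] [Fintype F] [Algebra F L]

noncomputable def linearizedMap (c : Fin t → L) : L →ₗ[F] L :=
  ∑ i, c i • ((FiniteField.frobeniusAlgHom F L) ^ (i : ℕ)).toLinearMap

variable {F}

theorem linearizedMap_apply (c : Fin t → L) (x : L) :
    linearizedMap F c x = (linearizedPoly (Fintype.card F) c).eval x := by
  simp [linearizedMap, linearizedPoly, eval_finsetSum, AlgHom.coe_pow,
    FiniteField.coe_frobeniusAlgHom, pow_iterate]

theorem linearizedMap_sub (c c' : Fin t → L) :
    linearizedMap F (c - c') = linearizedMap F c - linearizedMap F c' := by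
  ext x
  simp [linearizedMap, sub_mul, Finset.sum_sub_distrib]

theorem finrank_ker_linearizedMap_le {c : Fin t → L} (hc : c ≠ 0) :
    finrank F (LinearMap.ker (linearizedMap F c)) ≤ t - 1 := by
  classical
  set P := linearizedPoly (Fintype.card F) c
  have hq : 1 < Fintype.card F := Fintype.one_lt_card
  have hP : P ≠ 0 := linearizedPoly_ne_zero hq hc
  have hsub : (LinearMap.ker (linearizedMap F c) : Set L) ⊆ P.roots.toFinset := by
    intro x hx
    simp [hP, P, ← linearizedMap_apply, LinearMap.mem_ker.mp hx]
  have : Finite (LinearMap.ker (linearizedMap F c)) :=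
    (P.roots.toFinset.finite_toSet.subset hsub).to_subtype
  have hcard : Nat.card (LinearMap.ker (linearizedMap F c)) ≤ Fintype.card F ^ (t - 1) :=
    calc Nat.card (LinearMap.ker (linearizedMap F c))
        = (LinearMap.ker (linearizedMap F c) : Set L).ncard := Nat.card_coe_set_eq _
      _ ≤ (P.roots.toFinset : Set L).ncard := Set.ncard_le_ncard hsub (Finset.finite_toSet _)
      _ = P.roots.toFinset.card := Set.ncard_coe_finset _
      _ ≤ P.natDegree := card_le_degree_of_subset_roots (by simp [Multiset.dedup_subset'])
      _ ≤ _ := natDegree_linearizedPoly_le (by omega) c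
  have : Module.Finite F (LinearMap.ker (linearizedMap F c)) := Module.Finite.of_finite
  rw [natCard_eq_pow_finrank (K := F), Nat.card_eq_fintype_card] at hcard
  exact (Nat.pow_le_pow_iff_right hq).mp hcard

end Linearized

theorem LinearMap.finrank_ker_comp_le_of_injective {K V W U : Type*} [Field K]
    [AddCommGroup V] [Module K V] [AddCommGroup W] [Module K W] [AddCommGroup U] [Module K U]
    [FiniteDimensional K W] (f : W →ₗ[K] U) {g : V →ₗ[K] W} (hg : Function.Injective g) :
    finrank K (ker (f ∘ₗ g)) ≤ finrank K (ker f) := by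
  rw [ker_comp, (Submodule.equivMapOfInjective g hg _).finrank_eq]
  exact Submodule.finrank_mono (Submodule.map_comap_le g _)

theorem Matrix.rank_toMatrix' {K m n : Type*} [Field K] [Fintype m] [Fintype n] [DecidableEq n]
    (f : (n → K) →ₗ[K] (m → K)) :
    (LinearMap.toMatrix' f).rank = finrank K (LinearMap.range f) := by
  rw [Matrix.rank, ← Matrix.toLin'_apply', Matrix.toLin'_toMatrix']

theorem exists_gabidulin_code (F : Type*) [Field F] [Fintype F] {a b δ : ℕ}
    (hδ : 1 ≤ δ) (hδa : δ ≤ a) (hab : a ≤ b) :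
    ∃ C : Fin (Fintype.card F ^ (b * (a - δ + 1))) → Matrix (Fin b) (Fin a) F,
      Pairwise fun i j => δ ≤ (C i - C j).rank := by
  classical
  have : Fact (ringChar F).Prime := ⟨CharP.char_is_prime F _⟩
  have : NeZero b := ⟨by omega⟩
  let L := FiniteField.Extension F (ringChar F) b
  let bL : Basis (Fin b) F L :=
    (finBasis F L).reindex (finCongr (FiniteField.finrank_extension F (ringChar F) b))
  let g : (Fin a → F) →ₗ[F] L := Fintype.linearCombination F (bL ∘ Fin.castLE hab)
  have hg : Function.Injective g := linearIndependent_iff_injective_fintypeLinearCombination.mp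
    (bL.linearIndependent.comp _ (Fin.castLE_injective hab))
  let code (c : Fin (a - δ + 1) → L) : Matrix (Fin b) (Fin a) F :=
    LinearMap.toMatrix' (bL.equivFun.toLinearMap ∘ₗ linearizedMap F c ∘ₗ g)
  have code_sub (c c' : Fin (a - δ + 1) → L) : code c - code c' = code (c - c') := by
    simp only [code, linearizedMap_sub, LinearMap.sub_comp, LinearMap.comp_sub, map_sub]
  have rank_code {c : Fin (a - δ + 1) → L} (hc : c ≠ 0) : δ ≤ (code c).rank := by
    have h := LinearMap.finrank_range_add_finrank_ker (linearizedMap F c ∘ₗ g)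
    have hker := (LinearMap.finrank_ker_comp_le_of_injective (linearizedMap F c) hg).trans
      (finrank_ker_linearizedMap_le hc)
    rw [finrank_fin_fun] at h
    rw [Matrix.rank_toMatrix', LinearMap.range_comp, LinearEquiv.finrank_map_eq]
    omega
  have hcard : Nat.card (Fin (a - δ + 1) → L) = Fintype.card F ^ (b * (a - δ + 1)) := by
    rw [Nat.card_fun, natCard_eq_pow_finrank (K := F), FiniteField.finrank_extension,
      Nat.card_eq_fintype_card, Nat.card_eq_fintype_card, Fintype.card_fin, pow_mul]
  let e := Finite.equivFinOfCardEq hcard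
  refine ⟨fun i => code (e.symm i), fun i j hij => ?_⟩
  dsimp only
  rw [code_sub]
  exact rank_code (sub_ne_zero.mpr (e.symm.injective.ne hij))

theorem exists_rank_metric_code (F : Type*) [Field F] [Fintype F] {k m δ : ℕ}
    (hδ : 1 ≤ δ) (hδk : δ ≤ k) (hδm : δ ≤ m) :
    ∃ C : Fin (Fintype.card F ^ (max k m * (min k m - δ + 1))) → Matrix (Fin m) (Fin k) F,
      Pairwise fun i j => δ ≤ (C i - C j).rank := by
  rcases le_total k m with h | h
  · rw [max_eq_right h, min_eq_left h]
    exact exists_gabidulin_code F hδ hδk h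
  · rw [max_eq_left h, min_eq_right h]
    obtain ⟨C, hC⟩ := exists_gabidulin_code F hδ hδm h
    refine ⟨fun i => (C i).transpose, fun i j hij => ?_⟩
    simpa only [← Matrix.transpose_sub, Matrix.rank_transpose] using hC hij

section Graph

variable {K V W : Type*} [Field K] [AddCommGroup V] [Module K V] [AddCommGroup W] [Module K W]

theorem LinearMap.finrank_graph (f : V →ₗ[K] W) : finrank K (graph f) = finrank K V := by
  rw [graph_eq_range_prod]
  exact finrank_range_of_inj fun x y h => congrArg Prod.fst h

theorem LinearMap.finrank_add_finrank_range_sub_le [FiniteDimensional K V]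
    [FiniteDimensional K W] (f g : V →ₗ[K] W) :
    finrank K V + finrank K (range (f - g)) ≤ finrank K ↥(graph f ⊔ graph g) := by
  set D := (range (f - g)).map (inr K V W)
  have hD : finrank K D = finrank K (range (f - g)) :=
    (Submodule.equivMapOfInjective _ inr_injective _).finrank_eq.symm
  have hdisj : graph f ⊓ D = ⊥ := by
    rw [eq_bot_iff]
    rintro _ ⟨hx, ⟨w, -, rfl⟩⟩
    simpa using hx
  have hle : graph f ⊔ D ≤ graph f ⊔ graph g := by
    refine sup_le le_sup_left ?_
    rintro _ ⟨_, ⟨v, rfl⟩, rfl⟩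
    have : inr K V W ((f - g) v) = (v, f v) - (v, g v) := by simp
    rw [this]
    exact sub_mem (Submodule.mem_sup_left (by simp)) (Submodule.mem_sup_right (by simp))
  have := Submodule.finrank_sup_add_finrank_inf_eq (graph f) D
  rw [hdisj, finrank_bot, finrank_graph, hD, add_zero] at this
  exact this ▸ Submodule.finrank_mono hle

end Graph

theorem Finset.exists_snd_ne_of_card_lt {ι α β : Type*} [Fintype α] {f : ι → α × β}
    (hf : Function.Injective f) {I : Finset ι} (h : Fintype.card α < I.card) :
    ∃ i ∈ I, ∃ j ∈ I, (f i).2 ≠ (f j).2 := by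
  obtain ⟨i, hi, j, hj, hne, h1⟩ := Finset.exists_ne_map_eq_of_card_lt_of_maps_to
    (t := Finset.univ) (f := fun i => (f i).1) (by simpa using h)
    fun i _ => Finset.mem_coe.mpr (Finset.mem_univ _)
  exact ⟨i, hi, j, hj, fun h2 => hne (hf (Prod.ext h1 h2))⟩

/-- Existence of a large family (repetitions allowed) of `k`-dimensional
subspaces of `F_q^n`, any `α` distinct members of which span a subspace of dimension
at least `δ + k`; a lower bound on the size of covering Grassmannian codes. -/
theorem stmt_4 (F : Type*) [Field F] [Fintype F]
    (n k δ α : ℕ) (hδ1 : 1 ≤ δ) (hδk : δ ≤ k) (hkn : k + δ ≤ n) (hα : 2 ≤ α) :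
    ∃ W : Fin ((α - 1) * Fintype.card F ^ (max k (n - k) * (min k (n - k) - δ + 1))) →
        Submodule F (Fin n → F),
      (∀ i, Module.finrank F (W i) = k) ∧
      ∀ I : Finset
          (Fin ((α - 1) * Fintype.card F ^ (max k (n - k) * (min k (n - k) - δ + 1)))),
        I.card = α → δ + k ≤ Module.finrank F ↥(I.sup W) := by
  obtain ⟨m, rfl⟩ : ∃ m, n = k + m := ⟨n - k, by omega⟩
  rw [Nat.add_sub_cancel_left]
  set N := Fintype.card F ^ (max k m * (min k m - δ + 1))
  obtain ⟨C, hC⟩ := exists_rank_metric_code F hδ1 hδk (m := m) (by omega)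
  let E : ((Fin k → F) × (Fin m → F)) ≃ₗ[F] (Fin (k + m) → F) :=
    (LinearEquiv.sumArrowLequivProdArrow (Fin k) (Fin m) F F).symm ≪≫ₗ
      LinearEquiv.funCongrLeft F F finSumFinEquiv.symm
  let idx : Fin ((α - 1) * N) ≃ Fin (α - 1) × Fin N := finProdFinEquiv.symm
  let W i := (LinearMap.graph (Matrix.toLin' (C (idx i).2))).map E.toLinearMap
  have finrank_W i : finrank F (W i) = k := by
    rw [LinearEquiv.finrank_map_eq, LinearMap.finrank_graph, finrank_fin_fun]
  refine ⟨W, finrank_W, fun I hI => ?_⟩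
  obtain ⟨i, hi, j, hj, hij⟩ :=
    Finset.exists_snd_ne_of_card_lt idx.injective (I := I) (by simp; omega)
  calc δ + k ≤ finrank F ↥(LinearMap.graph (Matrix.toLin' (C (idx i).2)) ⊔
        LinearMap.graph (Matrix.toLin' (C (idx j).2))) := by
        have := LinearMap.finrank_add_finrank_range_sub_le (Matrix.toLin' (C (idx i).2))
          (Matrix.toLin' (C (idx j).2))
        rw [finrank_fin_fun, ← map_sub, Matrix.toLin'_apply', ← Matrix.rank] at this
        linarith [hC hij]
    _ = finrank F ↥(W i ⊔ W j) := by rw [← Submodule.map_sup, LinearEquiv.finrank_map_eq]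
    _ ≤ finrank F ↥(I.sup W) := Submodule.finrank_mono (sup_le (I.le_sup hi) (I.le_sup hj))
end

section
/- Let q be a prime power and F_q the field with q elements, and let k, n, L be positive integers with n > 2k. Let F be an [n,k,L]_q almost affinely disjoint family, i.e., a family of k-dimensional F_q-linear subspaces of F_q^n such that (i) any two distinct members of F intersect trivially, and (ii) for every S ∈ F and every u ∈ F_q^n \ S, the affine subspace u + S meets at most L members of F. Then |F| ≤ 1 + L·(q^{n−k} − 1)/(q^k − 1); equivalently (|F| − 1)·(q^k − 1) ≤ L·(q^{n−k} − 1). -/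
/-- Upper bound on the size of an `[n,k,L]_q` almost affinely disjoint
family of subspaces: `(|F| − 1)·(q^k − 1) ≤ L·(q^{n−k} − 1)`. -/
theorem stmt_6 (K : Type*) [Field K] [Fintype K]
    (n k L : ℕ) (hk : 1 ≤ k) (hL : 1 ≤ L) (hn : 2 * k < n)
    (𝓕 : Finset (Submodule K (Fin n → K)))
    (hdim : ∀ S ∈ 𝓕, Module.finrank K S = k)
    (hdisj : ∀ S ∈ 𝓕, ∀ T ∈ 𝓕, S ≠ T → S ⊓ T = ⊥)
    (hAAD : ∀ S ∈ 𝓕, ∀ u : Fin n → K, u ∉ S →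
      Nat.card {T : Submodule K (Fin n → K) // T ∈ 𝓕 ∧ ∃ v ∈ S, u + v ∈ T} ≤ L) :
    (𝓕.card - 1) * (Fintype.card K ^ k - 1) ≤ L * (Fintype.card K ^ (n - k) - 1) := by
  classical
  set q := Fintype.card K with hq
  rcases Nat.lt_or_ge 𝓕.card 2 with hcard | hcard
  · have : 𝓕.card - 1 = 0 := by omega
    simp [this]
  obtain ⟨S₀, hS₀⟩ := Finset.card_pos.mp (by omega : 0 < 𝓕.card)
  letI : Fintype ((Fin n → K) ⧸ S₀) := Fintype.ofFinite _
  set π : (Fin n → K) →ₗ[K] (Fin n → K) ⧸ S₀ := S₀.mkQ with hπ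
  have hVrank : Module.finrank K (Fin n → K) = n := by
    simp [Module.finrank_pi]
  have hQcard : Fintype.card ((Fin n → K) ⧸ S₀) = q ^ (n - k) := by
    rw [Module.card_eq_pow_finrank (K := K)]
    have h2 := S₀.finrank_quotient_add_finrank
    rw [hdim S₀ hS₀, hVrank] at h2
    have h3 : Module.finrank K ((Fin n → K) ⧸ S₀) = n - k := by omega
    rw [h3]
  -- the key predicate
  set P : ((Fin n → K) ⧸ S₀) → Submodule K (Fin n → K) → Prop :=
    fun c T => ∃ x ∈ T, π x = c with hP
  set A : Finset ((Fin n → K) ⧸ S₀) := Finset.univ.erase 0 with hA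
  have hAcard : A.card = q ^ (n - k) - 1 := by
    rw [hA, Finset.card_erase_of_mem (Finset.mem_univ _), Finset.card_univ, hQcard]
  -- lower bound per T
  have hlow : ∀ T ∈ 𝓕.erase S₀, q ^ k - 1 ≤ (A.filter (fun c => P c T)).card := by
    intro T hT
    rw [Finset.mem_erase] at hT
    obtain ⟨hTne, hTF⟩ := hT
    letI : Fintype T := Fintype.ofFinite T
    have hinj : Function.Injective (fun x : T => π (x : Fin n → K)) := by
      intro x y hxy
      simp only [hπ, Submodule.mkQ_apply] at hxy
      have hsub : (x : Fin n → K) - y ∈ S₀ := (Submodule.Quotient.eq S₀).mp hxy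
      have hmem : (x : Fin n → K) - y ∈ S₀ ⊓ T := ⟨hsub, sub_mem x.2 y.2⟩
      rw [hdisj S₀ hS₀ T hTF (Ne.symm hTne), Submodule.mem_bot, sub_eq_zero] at hmem
      exact Subtype.ext hmem
    set B : Finset ((Fin n → K) ⧸ S₀) :=
      Finset.univ.image (fun x : T => π (x : Fin n → K)) with hB
    have hBcard : B.card = q ^ k := by
      rw [hB, Finset.card_image_of_injective _ hinj, Finset.card_univ,
        Module.card_eq_pow_finrank (K := K), hdim T hTF]
    have hsub : B.erase 0 ⊆ A.filter (fun c => P c T) := by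
      intro c hc
      rw [Finset.mem_erase] at hc
      obtain ⟨hc0, hcB⟩ := hc
      rw [Finset.mem_filter]
      refine ⟨Finset.mem_erase.mpr ⟨hc0, Finset.mem_univ _⟩, ?_⟩
      rw [hB, Finset.mem_image] at hcB
      obtain ⟨x, -, hx⟩ := hcB
      exact ⟨x, x.2, hx⟩
    calc q ^ k - 1 = B.card - 1 := by rw [hBcard]
      _ ≤ (B.erase 0).card := Finset.pred_card_le_card_erase
      _ ≤ _ := Finset.card_le_card hsub
  -- upper bound per c
  have hup : ∀ c ∈ A, ((𝓕.erase S₀).filter (fun T => P c T)).card ≤ L := by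
    intro c hc
    obtain ⟨u, rfl⟩ := S₀.mkQ_surjective c
    have hu : u ∉ S₀ := by
      intro h
      rw [hA, Finset.mem_erase] at hc
      exact hc.1 ((Submodule.Quotient.mk_eq_zero S₀).mpr h)
    have hequiv : ∀ T : Submodule K (Fin n → K),
        P (S₀.mkQ u) T ↔ ∃ v ∈ S₀, u + v ∈ T := by
      intro T
      constructor
      · rintro ⟨x, hxT, hx⟩
        refine ⟨x - u, ?_, by simpa using hxT⟩
        have hx' : Submodule.Quotient.mk (p := S₀) x = Submodule.Quotient.mk u := by
          simpa [hπ] using hx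
        exact (Submodule.Quotient.eq S₀).mp hx'
      · rintro ⟨v, hv, hT⟩
        refine ⟨u + v, hT, ?_⟩
        simp only [hπ, Submodule.mkQ_apply]
        exact (Submodule.Quotient.eq S₀).mpr (by simpa using hv)
    have hNat : (𝓕.filter (fun T => ∃ v ∈ S₀, u + v ∈ T)).card
        = Nat.card {T : Submodule K (Fin n → K) // T ∈ 𝓕 ∧ ∃ v ∈ S₀, u + v ∈ T} := by
      rw [← Fintype.card_coe, ← Nat.card_eq_fintype_card]
      exact Nat.card_congr (Equiv.subtypeEquivRight (fun T => Finset.mem_filter))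
    have hss : (𝓕.erase S₀).filter (fun T => P (S₀.mkQ u) T)
        ⊆ 𝓕.filter (fun T => ∃ v ∈ S₀, u + v ∈ T) := by
      intro T hT
      rw [Finset.mem_filter] at hT ⊢
      exact ⟨Finset.mem_of_mem_erase hT.1, (hequiv T).mp hT.2⟩
    calc ((𝓕.erase S₀).filter (fun T => P (S₀.mkQ u) T)).card
        ≤ (𝓕.filter (fun T => ∃ v ∈ S₀, u + v ∈ T)).card := Finset.card_le_card hss
      _ = Nat.card {T : Submodule K (Fin n → K) // T ∈ 𝓕 ∧ ∃ v ∈ S₀, u + v ∈ T} := hNat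
      _ ≤ L := hAAD S₀ hS₀ u hu
  -- double counting
  have hswap : ∑ T ∈ 𝓕.erase S₀, (A.filter (fun c => P c T)).card
      = ∑ c ∈ A, ((𝓕.erase S₀).filter (fun T => P c T)).card := by
    simp_rw [Finset.card_filter]
    exact Finset.sum_comm
  calc (𝓕.card - 1) * (q ^ k - 1)
      = ∑ T ∈ 𝓕.erase S₀, (q ^ k - 1) := by
        rw [Finset.sum_const, Finset.card_erase_of_mem hS₀, smul_eq_mul]
    _ ≤ ∑ T ∈ 𝓕.erase S₀, (A.filter (fun c => P c T)).card :=
        Finset.sum_le_sum hlow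
    _ = ∑ c ∈ A, ((𝓕.erase S₀).filter (fun T => P c T)).card := hswap
    _ ≤ ∑ c ∈ A, L := Finset.sum_le_sum hup
    _ = L * (q ^ (n - k) - 1) := by
        rw [Finset.sum_const, smul_eq_mul, hAcard, Nat.mul_comm]
end

section
/- Let ℓ ≥ 1, q = 2^ℓ, let b be an integer with 0 ≤ b ≤ q − 1, and let ξ₁, ξ₂ ∈ F_q be nonzero. Let P' ∈ F_q[x,y] be a polynomial whose degree in x and degree in y are both at most q − 1 and whose coefficients at the monomials x^{q−1}y^b and y^b are both zero, and set P = ξ₁·x^{q−1}y^b + ξ₂·y^b + P'. Then there exists γ ∈ F_q such that the univariate polynomial P(X, γ) ∈ F_q[X] has degree exactly q − 1. In particular, for every integer r with 1 ≤ r ≤ q − 1, P is (Φ, q−r)*-bad. -/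
open Polynomial

noncomputable def Qpoly {F : Type*} [CommSemiring F] (P : MvPolynomial (Fin 2) F) (n : ℕ) :
    Polynomial F :=
  ∑ d ∈ P.support, if d 0 = n then Polynomial.C (MvPolynomial.coeff d P) * Polynomial.X ^ (d 1)
    else 0

lemma fin2_finsupp (d : Fin 2 →₀ ℕ) :
    d = Finsupp.single 0 (d 0) + Finsupp.single 1 (d 1) := by
  ext i
  fin_cases i <;> simp

lemma coeff_aeval {F : Type*} [CommRing F] (P : MvPolynomial (Fin 2) F) (γ : F) (n : ℕ) :
    (MvPolynomial.aeval ![Polynomial.X, Polynomial.C γ] P).coeff n = (Qpoly P n).eval γ := by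
  conv_lhs => rw [P.as_sum]
  rw [map_sum, Polynomial.finset_sum_coeff, Qpoly, Polynomial.eval_finset_sum]
  refine Finset.sum_congr rfl fun d _ => ?_
  rw [MvPolynomial.aeval_monomial, Finsupp.prod_fintype _ _ (by intro i; exact pow_zero _)]
  rw [Fin.prod_univ_two]
  simp only [Matrix.cons_val_zero, Matrix.cons_val_one, Matrix.head_cons, ← Polynomial.C_pow,
    Algebra.algebraMap_self_apply]
  rw [show (algebraMap F (Polynomial F)) (MvPolynomial.coeff d P) * (X ^ d 0 * C (γ ^ d 1))
      = C (MvPolynomial.coeff d P * γ ^ d 1) * X ^ d 0 by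
    simp [Polynomial.algebraMap_eq]; ring]
  rw [Polynomial.coeff_C_mul, Polynomial.coeff_X_pow]
  split_ifs with h1 h2 h3 <;> simp_all

lemma Qpoly_coeff {F : Type*} [CommRing F] (P : MvPolynomial (Fin 2) F) (n m : ℕ) :
    (Qpoly P n).coeff m =
      MvPolynomial.coeff (Finsupp.single 0 n + Finsupp.single 1 m) P := by
  classical
  rw [Qpoly, Polynomial.finset_sum_coeff]
  have : ∀ d ∈ P.support,
      (if d 0 = n then Polynomial.C (MvPolynomial.coeff d P) * Polynomial.X ^ (d 1) else 0).coeff m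
      = if d = Finsupp.single 0 n + Finsupp.single 1 m then MvPolynomial.coeff d P else 0 := by
    intro d _
    split_ifs with h1 h2 h3
    · rw [Polynomial.coeff_C_mul, Polynomial.coeff_X_pow, if_pos, mul_one]
      rw [h2]; simp
    · rw [Polynomial.coeff_C_mul, Polynomial.coeff_X_pow, if_neg, mul_zero]
      intro hm
      exact h2 (by rw [fin2_finsupp d, h1, hm])
    · exfalso; apply h1; rw [h3]; simp
    · simp
  rw [Finset.sum_congr rfl this, Finset.sum_ite_eq' P.support]
  split_ifs with h
  · rfl
  · exact (MvPolynomial.notMem_support_iff.mp h).symm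


/-- If `P = ξ₁·x^{q−1}y^b + ξ₂·y^b + P'` with `ξ₁, ξ₂ ≠ 0` and `P'`
of `x`- and `y`-degree at most `q−1` not containing the monomials `x^{q−1}y^b` and `y^b`,
then some substitution `y := γ` yields a univariate polynomial of degree exactly `q−1`;
in particular `P` is `(Φ, q−r)*`-bad for every `1 ≤ r ≤ q−1`. -/
theorem stmt_8 (F : Type*) [Field F] [Fintype F]
    (ℓ : ℕ) (hℓ : 1 ≤ ℓ) (hF : Fintype.card F = 2 ^ ℓ)
    (b : ℕ) (hb : b ≤ 2 ^ ℓ - 1)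
    (ξ₁ ξ₂ : F) (hξ₁ : ξ₁ ≠ 0) (hξ₂ : ξ₂ ≠ 0)
    (P' : MvPolynomial (Fin 2) F)
    (hdx : MvPolynomial.degreeOf 0 P' ≤ 2 ^ ℓ - 1)
    (hdy : MvPolynomial.degreeOf 1 P' ≤ 2 ^ ℓ - 1)
    (hc1 : MvPolynomial.coeff (Finsupp.single 0 (2 ^ ℓ - 1) + Finsupp.single 1 b) P' = 0)
    (hc2 : MvPolynomial.coeff (Finsupp.single 1 b) P' = 0)
    (P : MvPolynomial (Fin 2) F)
    (hP : P = MvPolynomial.C ξ₁ * MvPolynomial.X 0 ^ (2 ^ ℓ - 1) * MvPolynomial.X 1 ^ b +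
      MvPolynomial.C ξ₂ * MvPolynomial.X 1 ^ b + P') :
    (∃ γ : F,
        (MvPolynomial.aeval ![Polynomial.X, Polynomial.C γ] P).degree =
          ((2 ^ ℓ - 1 : ℕ) : WithBot ℕ)) ∧
      ∀ r : ℕ, 1 ≤ r → r ≤ 2 ^ ℓ - 1 →
        ¬ (∀ α β γ : F,
            ((MvPolynomial.aeval
                  ![Polynomial.X,
                    Polynomial.C α * Polynomial.X ^ 2 + Polynomial.C β * Polynomial.X +
                      Polynomial.C γ] P) %ₘ
                (Polynomial.X ^ (2 ^ ℓ) - Polynomial.X)).degree <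
              ((2 ^ ℓ - r : ℕ) : WithBot ℕ)) := by
  classical
  have hq2 : 2 ≤ 2 ^ ℓ := by calc 2 = 2 ^ 1 := rfl
                                 _ ≤ 2 ^ ℓ := Nat.pow_le_pow_right (by norm_num) hℓ
  -- coefficient formula for P
  have coeffP : ∀ d : Fin 2 →₀ ℕ, MvPolynomial.coeff d P =
      (if Finsupp.single 0 (2 ^ ℓ - 1) + Finsupp.single 1 b = d then ξ₁ else 0) +
      (if Finsupp.single 1 b = d then ξ₂ else 0) + MvPolynomial.coeff d P' := by
    intro d
    rw [hP]
    rw [MvPolynomial.X_pow_eq_monomial, MvPolynomial.X_pow_eq_monomial,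
      MvPolynomial.C_mul_monomial, MvPolynomial.monomial_mul, MvPolynomial.C_mul_monomial]
    simp [MvPolynomial.coeff_add, MvPolynomial.coeff_monomial]
  have ev0 : ∀ n m : ℕ, ((Finsupp.single (0 : Fin 2) n + Finsupp.single 1 m) : Fin 2 →₀ ℕ) 0 = n := by
    intro n m; simp [Finsupp.single_apply]
  have ev1 : ∀ n m : ℕ, ((Finsupp.single (0 : Fin 2) n + Finsupp.single 1 m) : Fin 2 →₀ ℕ) 1 = m := by
    intro n m; simp [Finsupp.single_apply]
  have evs0 : ∀ m : ℕ, (Finsupp.single (1 : Fin 2) m : Fin 2 →₀ ℕ) 0 = 0 := by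
    intro m; simp [Finsupp.single_apply]
  set G := Qpoly P (2 ^ ℓ - 1) with hG
  have hGb : G.coeff b = ξ₁ := by
    rw [hG, Qpoly_coeff, coeffP, hc1, if_pos rfl, if_neg, add_zero, add_zero]
    intro h
    have h0 := DFunLike.congr_fun h 0
    rw [evs0, ev0] at h0
    omega
  have hGcoeff : ∀ m : ℕ, 2 ^ ℓ - 1 < m → G.coeff m = 0 := by
    intro m hm
    rw [hG, Qpoly_coeff, coeffP]
    rw [if_neg, if_neg, zero_add, zero_add]
    · by_contra h
      have := MvPolynomial.monomial_le_degreeOf 1 (MvPolynomial.mem_support_iff.mpr h)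
      rw [ev1] at this
      omega
    · intro h
      have h0 := DFunLike.congr_fun h 0
      rw [evs0, ev0] at h0
      omega
    · intro h
      have h1 := DFunLike.congr_fun h 1
      rw [ev1, ev1] at h1
      omega
  -- choose γ with eval γ G ≠ 0
  have hGne : G ≠ 0 := fun h => hξ₁ (by rw [← hGb, h, Polynomial.coeff_zero])
  have hGdeg : G.natDegree ≤ 2 ^ ℓ - 1 :=
    Polynomial.natDegree_le_iff_coeff_eq_zero.mpr hGcoeff
  obtain ⟨γ, hγ⟩ : ∃ γ : F, G.eval γ ≠ 0 := by
    by_contra h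
    push_neg at h
    exact hGne (Polynomial.eq_zero_of_natDegree_lt_card_of_eval_eq_zero G
      Function.injective_id (fun i => h i) (by rw [hF]; omega))
  set f := MvPolynomial.aeval ![Polynomial.X, Polynomial.C γ] P with hf
  have hcoef : f.coeff (2 ^ ℓ - 1) ≠ 0 := by
    rw [hf, coeff_aeval]; exact hγ
  have hhigh : ∀ n : ℕ, 2 ^ ℓ - 1 < n → f.coeff n = 0 := by
    intro n hn
    rw [hf, coeff_aeval]
    have : Qpoly P n = 0 := by
      ext m
      rw [Qpoly_coeff, coeffP, Polynomial.coeff_zero]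
      rw [if_neg, if_neg, zero_add, zero_add]
      · by_contra h
        have := MvPolynomial.monomial_le_degreeOf 0 (MvPolynomial.mem_support_iff.mpr h)
        rw [ev0] at this
        omega
      · intro h
        have h0 := DFunLike.congr_fun h 0
        rw [evs0, ev0] at h0
        omega
      · intro h
        have h0 := DFunLike.congr_fun h 0
        rw [ev0, ev0] at h0
        omega
    rw [this, Polynomial.eval_zero]
  have hdeg : f.degree = ((2 ^ ℓ - 1 : ℕ) : WithBot ℕ) := by
    refine le_antisymm ?_ (Polynomial.le_degree_of_ne_zero hcoef)
    rw [Polynomial.degree_le_iff_coeff_zero]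
    intro m hm
    exact hhigh m (by exact_mod_cast hm)
  refine ⟨⟨γ, hdeg⟩, ?_⟩
  intro r hr1 hr2 hall
  have hmat : (![Polynomial.X, Polynomial.C (0:F) * Polynomial.X ^ 2 + Polynomial.C 0 * Polynomial.X +
      Polynomial.C γ] : Fin 2 → Polynomial F) = ![Polynomial.X, Polynomial.C γ] := by
    norm_num
  have hall' := hall 0 0 γ
  rw [hmat, ← hf] at hall'
  have hmon : (Polynomial.X ^ (2 ^ ℓ) - Polynomial.X : Polynomial F).Monic := by
    refine (Polynomial.monic_X_pow _).sub_of_left ?_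
    rw [Polynomial.degree_X_pow, Polynomial.degree_X]
    exact_mod_cast (by omega : 1 < 2 ^ ℓ)
  have hdeglt : f.degree < (Polynomial.X ^ (2 ^ ℓ) - Polynomial.X : Polynomial F).degree := by
    rw [Polynomial.degree_sub_eq_left_of_degree_lt, Polynomial.degree_X_pow, hdeg]
    · exact_mod_cast (by omega : 2 ^ ℓ - 1 < 2 ^ ℓ)
    · rw [Polynomial.degree_X_pow, Polynomial.degree_X]
      exact_mod_cast (by omega : 1 < 2 ^ ℓ)
  rw [(Polynomial.modByMonic_eq_self_iff hmon).mpr hdeglt, hdeg] at hall'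
  have : ¬ ((2 ^ ℓ - 1 : ℕ) : WithBot ℕ) < ((2 ^ ℓ - r : ℕ) : WithBot ℕ) := by
    exact_mod_cast (by omega : ¬ (2 ^ ℓ - 1 < 2 ^ ℓ - r))
  exact this hall'
end

section
/- Let ℓ ≥ 1, q = 2^ℓ, and let r be an integer with 1 ≤ r ≤ q − 1. Let C = { f ∈ F_q[x,y] : deg_x f ≤ q−1, deg_y f ≤ q−1, and for all α, β, γ ∈ F_q the remainder of f(X, αX²+βX+γ) upon division by X^q − X has degree less than q − r } be the quadratic-lifted Reed–Solomon code. Then: (i) every nonzero f ∈ C has at least qr + 1 nonzero evaluations on F_q², and (ii) there exists a nonzero f ∈ C with at most qr + q nonzero evaluations on F_q². Hence the minimum Hamming distance d of the evaluation code {(f(u,v))_{(u,v)∈F_q²} : f ∈ C} satisfies qr + 1 ≤ d ≤ qr + q. -/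
/-!
A nonzero codeword `f` has individual degrees `< q`, so it is nonzero at some point `(u, v)`.
Through `(u, v)` pass the `q²` curves `y = v + a (x² - u²) + b (x - u)`. On `F_q` the restriction
of `f` to such a curve agrees with its remainder modulo `X^q - X`, a polynomial of degree `< q - r`
that does not vanish at `u`; hence `f` is nonzero at `r` further points of every curve. A point
`(x, y)` with `x ≠ u` lies on at most `q` of the curves (`a` determines `b`), so counting
incidences gives `q² r ≤ q (|supp f| - 1)`.

Conversely, a polynomial in `x` alone with `q - 1 - r` distinct roots is a codeword: each of its
restrictions is itself, of degree `q - 1 - r`. It vanishes exactly on `q - 1 - r` vertical lines,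
so it has `(r + 1) q` nonzero values.
-/

open Polynomial Finset

namespace FiniteField

variable {F : Type*} [Field F] [Fintype F]

theorem monic_X_pow_card_sub_X : (X ^ Fintype.card F - X : F[X]).Monic :=
  monic_X_pow_sub (by rw [degree_X]; exact_mod_cast Fintype.one_lt_card)

theorem eval_modByMonic_X_pow_card_sub_X (p : F[X]) (x : F) :
    (p %ₘ (X ^ Fintype.card F - X)).eval x = p.eval x := by
  conv_rhs => rw [← modByMonic_add_div p (X ^ Fintype.card F - X)]
  simp [FiniteField.pow_card]

end FiniteField

theorem Polynomial.card_sub_natDegree_le_card_eval_ne_zero {F : Type*} [Field F] [Fintype F]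
    [DecidableEq F] {g : F[X]} (hg : g ≠ 0) :
    Fintype.card F - g.natDegree ≤ #{x | g.eval x ≠ 0} := by
  have hroots : #{x | g.eval x = 0} ≤ g.natDegree :=
    card_le_degree_of_subset_roots fun x hx => by simpa [mem_roots hg] using hx
  have := card_filter_add_card_filter_not (s := univ) (fun x => g.eval x = 0)
  rw [card_univ] at this
  simp_rw [ne_eq]
  omega

theorem MvPolynomial.exists_eval_ne_zero_of_degreeOf_lt {F σ : Type*} [Field F] [Fintype F]
    [Finite σ] {f : MvPolynomial σ F} (hdeg : ∀ i, f.degreeOf i < Fintype.card F)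
    (hf : f ≠ 0) :
    ∃ x, eval x f ≠ 0 := by
  by_contra! h
  exact hf (eq_zero_of_eval_zero_at_prod_finset f (fun _ => univ) hdeg fun x _ => h x)

theorem Polynomial.totalDegree_toMvPolynomial_le {R σ : Type*} [CommSemiring R] (p : R[X])
    (i : σ) :
    (p.toMvPolynomial i).totalDegree ≤ p.natDegree := by
  conv_lhs => rw [p.as_sum_range_C_mul_X_pow]
  simp only [map_sum, map_mul, toMvPolynomial_C, map_pow, toMvPolynomial_X]
  refine MvPolynomial.totalDegree_finsetSum_le fun n hn => ?_
  rw [MvPolynomial.C_mul_X_pow_eq_monomial]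
  refine (MvPolynomial.totalDegree_monomial_le _ _).trans ?_
  rw [Finsupp.sum_single_index rfl]
  exact Nat.lt_succ_iff.mp (mem_range.mp hn)

section Curves

variable {F : Type*} [Field F] {u v a b x : F}

def quadThrough (u v a b x : F) : F := v + a * (x ^ 2 - u ^ 2) + b * (x - u)

@[simp] theorem quadThrough_self : quadThrough u v a b u = v := by simp [quadThrough]

theorem quadThrough_eq : quadThrough u v a b x = a * x ^ 2 + b * x + (v - a * u ^ 2 - b * u) := by
  unfold quadThrough; ring

theorem quadThrough_injective (hx : x ≠ u) (a : F) :
    Function.Injective fun b => quadThrough u v a b x := by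
  intro b b' h
  have : (b - b') * (x - u) = 0 := by simp only [quadThrough] at h; linear_combination h
  simpa [sub_eq_zero, hx] using this

variable [Fintype F] [DecidableEq F]

theorem card_filter_quadThrough_eq_le (hx : x ≠ u) (y : F) :
    #{ab : F × F | quadThrough u v ab.1 ab.2 x = y} ≤ Fintype.card F := by
  refine card_le_card_of_injOn Prod.fst (fun _ _ => mem_univ _) ?_
  rintro ⟨a, b⟩ hab ⟨a', b'⟩ hab' (rfl : a = a')
  simp only [coe_filter, mem_univ, true_and, Set.mem_ofPred_eq] at hab hab'
  rw [quadThrough_injective hx a (hab.trans hab'.symm)]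

theorem card_mul_add_one_le_card_of_quadThrough {Z : Finset (F × F)} (huv : (u, v) ∈ Z) {r : ℕ}
    (hr : ∀ a b, r ≤ #{x | x ≠ u ∧ (x, quadThrough u v a b x) ∈ Z}) :
    Fintype.card F * r + 1 ≤ #Z := by
  set Z' := Z.filter (·.1 ≠ u)
  have hcount : #(univ : Finset (F × F)) * r ≤ #Z' * Fintype.card F := by
    refine card_mul_le_card_mul (fun ab p => quadThrough u v ab.1 ab.2 p.1 = p.2)
      (fun ab _ => (hr ab.1 ab.2).trans ?_) (fun p hp => ?_)
    · refine card_le_card_of_injOn (fun x => (x, quadThrough u v ab.1 ab.2 x)) (fun x hx => ?_)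
        fun x _ x' _ h => congrArg Prod.fst h
      simp only [coe_filter, mem_univ, true_and, Set.mem_ofPred_eq] at hx
      simp [Z', bipartiteAbove, hx]
    · simp only [Z', mem_filter] at hp
      exact card_filter_quadThrough_eq_le hp.2 p.2
  have hZ' : #Z' < #Z := card_lt_card (filter_ssubset.2 ⟨(u, v), huv, by simp⟩)
  rw [card_univ, Fintype.card_prod, mul_assoc, mul_comm] at hcount
  have := Nat.le_of_mul_le_mul_right hcount Fintype.card_pos
  omega

end Curves

section Code

variable {F : Type*} [Field F]

noncomputable def quadRestrict (α β γ : F) : MvPolynomial (Fin 2) F →ₐ[F] F[X] :=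
  MvPolynomial.aeval ![X, C α * X ^ 2 + C β * X + C γ]

theorem eval_quadRestrict (α β γ x : F) (f : MvPolynomial (Fin 2) F) :
    (quadRestrict α β γ f).eval x = MvPolynomial.eval ![x, α * x ^ 2 + β * x + γ] f := by
  rw [quadRestrict, ← coe_aeval_eq_eval, ← AlgHom.comp_apply, MvPolynomial.comp_aeval]
  change MvPolynomial.eval _ f = _
  congr 2
  funext i
  fin_cases i <;> simp

variable [Fintype F]

variable (F) in
def quadLiftedRS (r : ℕ) : Set (MvPolynomial (Fin 2) F) :=
  {f | f.degreeOf 0 ≤ Fintype.card F - 1 ∧ f.degreeOf 1 ≤ Fintype.card F - 1 ∧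
    ∀ α β γ : F, (quadRestrict α β γ f %ₘ (X ^ Fintype.card F - X)).degree <
      ((Fintype.card F - r : ℕ) : WithBot ℕ)}

theorem le_card_filter_quadThrough_of_mem_quadLiftedRS [DecidableEq F] {r : ℕ}
    {f : MvPolynomial (Fin 2) F} (hf : f ∈ quadLiftedRS F r) {u v : F}
    (huv : MvPolynomial.eval ![u, v] f ≠ 0) (a b : F) :
    r ≤ #{x | x ≠ u ∧ MvPolynomial.eval ![x, quadThrough u v a b x] f ≠ 0} := by
  set g := quadRestrict a b (v - a * u ^ 2 - b * u) f %ₘ (X ^ Fintype.card F - X)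
  have hg : ∀ x, g.eval x = MvPolynomial.eval ![x, quadThrough u v a b x] f := fun x => by
    rw [FiniteField.eval_modByMonic_X_pow_card_sub_X, eval_quadRestrict, quadThrough_eq]
  have hgu : g.eval u ≠ 0 := by rwa [hg, quadThrough_self]
  have hg0 : g ≠ 0 := fun h => hgu (by rw [h, eval_zero])
  have hdeg : g.natDegree < Fintype.card F - r := (natDegree_lt_iff_degree_lt hg0).2 (hf.2.2 _ _ _)
  have hcard := card_sub_natDegree_le_card_eval_ne_zero hg0
  have hfilter : ({x | x ≠ u ∧ MvPolynomial.eval ![x, quadThrough u v a b x] f ≠ 0} :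
      Finset F) = ({x | g.eval x ≠ 0} : Finset F).erase u := by
    ext x
    simp only [mem_filter, mem_erase, mem_univ, true_and, hg]
  rw [hfilter, card_erase_of_mem (by simpa using hgu)]
  omega

theorem card_mul_add_one_le_card_eval_ne_zero {r : ℕ} {f : MvPolynomial (Fin 2) F}
    (hf : f ∈ quadLiftedRS F r) (hf0 : f ≠ 0) :
    Fintype.card F * r + 1 ≤ Nat.card {p : F × F // MvPolynomial.eval ![p.1, p.2] f ≠ 0} := by
  classical
  have hq := Fintype.card_pos (α := F)
  have hdeg : ∀ i : Fin 2, f.degreeOf i < Fintype.card F :=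
    Fin.forall_fin_two.2 ⟨by have := hf.1; omega, by have := hf.2.1; omega⟩
  obtain ⟨w, hw⟩ := MvPolynomial.exists_eval_ne_zero_of_degreeOf_lt hdeg hf0
  have hw' : ![w 0, w 1] = w := by funext i; fin_cases i <;> rfl
  rw [Nat.card_eq_fintype_card, Fintype.card_subtype]
  refine card_mul_add_one_le_card_of_quadThrough (u := w 0) (v := w 1) (by simpa [hw'])
    fun a b => ?_
  simpa using le_card_filter_quadThrough_of_mem_quadLiftedRS hf (by rwa [hw']) a b

theorem toMvPolynomial_mem_quadLiftedRS {r : ℕ} {p : F[X]}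
    (hp : p.natDegree < Fintype.card F - r) :
    p.toMvPolynomial (0 : Fin 2) ∈ quadLiftedRS F r := by
  have hdeg : ∀ i, (p.toMvPolynomial (0 : Fin 2)).degreeOf i ≤ Fintype.card F - 1 := fun i =>
    ((MvPolynomial.degreeOf_le_totalDegree _ i).trans (totalDegree_toMvPolynomial_le p 0)).trans
      (by omega)
  refine ⟨hdeg 0, hdeg 1, fun α β γ => ?_⟩
  have hself : p %ₘ (X ^ Fintype.card F - X) = p := by
    rw [modByMonic_eq_self_iff FiniteField.monic_X_pow_card_sub_X]
    refine degree_lt_degree ?_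
    rw [FiniteField.X_pow_card_sub_X_natDegree_eq F Fintype.one_lt_card]
    omega
  simp only [quadRestrict, MvPolynomial.aeval_toMvPolynomial, Matrix.cons_val_zero,
    aeval_X_left_apply, hself]
  exact degree_le_natDegree.trans_lt (WithBot.coe_lt_coe.2 hp)

theorem card_eval_toMvPolynomial_ne_zero [DecidableEq F] (p : F[X]) :
    Nat.card {x : F × F // MvPolynomial.eval ![x.1, x.2] (p.toMvPolynomial (0 : Fin 2)) ≠ 0} =
      #{x | p.eval x ≠ 0} * Fintype.card F := by
  rw [Nat.card_eq_fintype_card, Fintype.card_subtype, ← card_univ (α := F), ← card_product]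
  congr 1
  ext ⟨x, y⟩
  simp

theorem exists_mem_quadLiftedRS_card_le {r : ℕ} (hr : r < Fintype.card F) :
    ∃ f ∈ quadLiftedRS F r, f ≠ 0 ∧
      Nat.card {p : F × F // MvPolynomial.eval ![p.1, p.2] f ≠ 0} ≤
        Fintype.card F * r + Fintype.card F := by
  classical
  obtain ⟨S, -, hS⟩ := exists_subset_card_eq (s := (univ : Finset F))
    (n := Fintype.card F - 1 - r) (by rw [card_univ]; omega)
  set p := Lagrange.nodal S id
  refine ⟨p.toMvPolynomial 0, toMvPolynomial_mem_quadLiftedRS ?_, ?_, ?_⟩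
  · rw [Lagrange.natDegree_nodal, hS]
    omega
  · exact (map_ne_zero_iff _ (toMvPolynomial_injective 0)).2 Lagrange.nodal_monic.ne_zero
  · have hzeros : ({x | p.eval x ≠ 0} : Finset F) = Sᶜ := by
      ext x
      simp [p, Lagrange.eval_nodal, prod_eq_zero_iff, sub_eq_zero]
    have hcompl : Fintype.card F - (Fintype.card F - 1 - r) = r + 1 := by omega
    rw [card_eval_toMvPolynomial_ne_zero, hzeros, card_compl, hS, hcompl, add_mul, one_mul,
      mul_comm]

end Code

theorem stmt_10_general (F : Type*) [Field F] [Fintype F]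
    (ℓ : ℕ) (hF : Fintype.card F = 2 ^ ℓ)
    (r : ℕ) (hr2 : r ≤ 2 ^ ℓ - 1) :
    (∀ f : MvPolynomial (Fin 2) F,
      MvPolynomial.degreeOf 0 f ≤ 2 ^ ℓ - 1 →
      MvPolynomial.degreeOf 1 f ≤ 2 ^ ℓ - 1 →
      (∀ α β γ : F,
        ((MvPolynomial.aeval
              ![Polynomial.X,
                Polynomial.C α * Polynomial.X ^ 2 + Polynomial.C β * Polynomial.X +
                  Polynomial.C γ] f) %ₘ
            (Polynomial.X ^ (2 ^ ℓ) - Polynomial.X)).degree <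
          ((2 ^ ℓ - r : ℕ) : WithBot ℕ)) →
      f ≠ 0 →
      2 ^ ℓ * r + 1 ≤ Nat.card {p : F × F // MvPolynomial.eval ![p.1, p.2] f ≠ 0}) ∧
    (∃ f : MvPolynomial (Fin 2) F,
      MvPolynomial.degreeOf 0 f ≤ 2 ^ ℓ - 1 ∧
      MvPolynomial.degreeOf 1 f ≤ 2 ^ ℓ - 1 ∧
      (∀ α β γ : F,
        ((MvPolynomial.aeval
              ![Polynomial.X,
                Polynomial.C α * Polynomial.X ^ 2 + Polynomial.C β * Polynomial.X +
                  Polynomial.C γ] f) %ₘ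
            (Polynomial.X ^ (2 ^ ℓ) - Polynomial.X)).degree <
          ((2 ^ ℓ - r : ℕ) : WithBot ℕ)) ∧
      f ≠ 0 ∧
      Nat.card {p : F × F // MvPolynomial.eval ![p.1, p.2] f ≠ 0} ≤ 2 ^ ℓ * r + 2 ^ ℓ) := by
  rw [← hF] at hr2 ⊢
  have hr : r < Fintype.card F := by have := Fintype.card_pos (α := F); omega
  obtain ⟨f, ⟨h0, h1, hcode⟩, hf0, hcard⟩ := exists_mem_quadLiftedRS_card_le hr
  exact ⟨fun f h0 h1 hcode hf0 => card_mul_add_one_le_card_eval_ne_zero ⟨h0, h1, hcode⟩ hf0,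
    f, h0, h1, hcode, hf0, hcard⟩

/-- Minimum-distance bounds for quadratic-lifted Reed–Solomon codes:
every nonzero codeword polynomial has at least `qr + 1` nonzero evaluations on `F_q²`,
and some nonzero codeword polynomial has at most `qr + q` nonzero evaluations. -/
theorem stmt_10 (F : Type*) [Field F] [Fintype F]
    (ℓ : ℕ) (hℓ : 1 ≤ ℓ) (hF : Fintype.card F = 2 ^ ℓ)
    (r : ℕ) (hr1 : 1 ≤ r) (hr2 : r ≤ 2 ^ ℓ - 1) :
    (∀ f : MvPolynomial (Fin 2) F,
      MvPolynomial.degreeOf 0 f ≤ 2 ^ ℓ - 1 →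
      MvPolynomial.degreeOf 1 f ≤ 2 ^ ℓ - 1 →
      (∀ α β γ : F,
        ((MvPolynomial.aeval
              ![Polynomial.X,
                Polynomial.C α * Polynomial.X ^ 2 + Polynomial.C β * Polynomial.X +
                  Polynomial.C γ] f) %ₘ
            (Polynomial.X ^ (2 ^ ℓ) - Polynomial.X)).degree <
          ((2 ^ ℓ - r : ℕ) : WithBot ℕ)) →
      f ≠ 0 →
      2 ^ ℓ * r + 1 ≤ Nat.card {p : F × F // MvPolynomial.eval ![p.1, p.2] f ≠ 0}) ∧
    (∃ f : MvPolynomial (Fin 2) F,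
      MvPolynomial.degreeOf 0 f ≤ 2 ^ ℓ - 1 ∧
      MvPolynomial.degreeOf 1 f ≤ 2 ^ ℓ - 1 ∧
      (∀ α β γ : F,
        ((MvPolynomial.aeval
              ![Polynomial.X,
                Polynomial.C α * Polynomial.X ^ 2 + Polynomial.C β * Polynomial.X +
                  Polynomial.C γ] f) %ₘ
            (Polynomial.X ^ (2 ^ ℓ) - Polynomial.X)).degree <
          ((2 ^ ℓ - r : ℕ) : WithBot ℕ)) ∧
      f ≠ 0 ∧
      Nat.card {p : F × F // MvPolynomial.eval ![p.1, p.2] f ≠ 0} ≤ 2 ^ ℓ * r + 2 ^ ℓ) :=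
  stmt_10_general F ℓ hF r hr2
end

section
/- Let ℓ ≥ 2, q = 2^ℓ, and let r be an integer with 1 ≤ r < q/2. If (a, b) ∈ S_0(ℓ; r) ∪ S_1(ℓ; r) ∪ S_2(ℓ; r), then (a mod 2^{ℓ−1}, b mod 2^{ℓ−1}) ∈ S_0(ℓ−1; r) ∪ S_1(ℓ−1; r) ∪ S_2(ℓ−1; r). -/
/-- `u ≤₂ v`: every binary digit of `u` is at most the corresponding binary digit
of `v` (the 2-shadow relation). -/
def le2 (u v : ℕ) : Prop := ∀ k, u.testBit k = true → v.testBit k = true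

/-- The set `S_t(ℓ; r)` of pairs `(a, b)` with `0 ≤ a, b ≤ 2^ℓ − 1` for which there exist
`i ≤₂ b`, `j ≤₂ (b − i)` and `1 ≤ r' ≤ r` with `2i + j + a = (t+1)·2^ℓ − r'`. -/
def Sset (ℓ r t : ℕ) : Set (ℕ × ℕ) :=
  {p | p.1 ≤ 2 ^ ℓ - 1 ∧ p.2 ≤ 2 ^ ℓ - 1 ∧
    ∃ i j r' : ℕ, le2 i p.2 ∧ le2 j (p.2 - i) ∧ 1 ≤ r' ∧ r' ≤ r ∧
      2 * i + j + p.1 = (t + 1) * 2 ^ ℓ - r'}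

/-!
Reducing the witnesses `i, j, a, b` modulo `Q = 2^(ℓ-1)` keeps the shadow conditions, because
`i ≤₂ b` means that `b - i` is computed without borrows, so `(b - i) mod Q = b mod Q - i mod Q`.
The reduced sum `s = 2i + j + a + r'` is still divisible by `Q`, and `i + j ≤ b < Q`, `a < Q`,
`r' ≤ r < Q` give `0 < s < 4Q`; hence `s = (t+1)Q` with `t ∈ {0, 1, 2}`.
-/

lemma le2.le {u v : ℕ} (h : le2 u v) : u ≤ v :=
  Nat.le_of_testBit h

lemma le2.mod_two_pow {u v : ℕ} (h : le2 u v) (m : ℕ) : le2 (u % 2 ^ m) (v % 2 ^ m) := by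
  intro k hk
  rw [Nat.testBit_mod_two_pow, Bool.and_eq_true] at hk ⊢
  exact ⟨hk.1, h k hk.2⟩

lemma Nat.sub_mod_of_le_of_mod_le {u v n : ℕ} (h : u ≤ v) (hmod : u % n ≤ v % n) :
    (v - u) % n = v % n - u % n := by
  obtain rfl | hn := n.eq_zero_or_pos
  · simp
  have hdiv : n * (u / n) ≤ n * (v / n) := Nat.mul_le_mul_left n (Nat.div_le_div_right h)
  have hsplit : v - u = (v % n - u % n) + n * (v / n - u / n) := by
    have := Nat.div_add_mod v n
    have := Nat.div_add_mod u n
    rw [Nat.mul_sub]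
    omega
  rw [hsplit, Nat.add_mul_mod_self_left, Nat.mod_eq_of_lt (by have := Nat.mod_lt v hn; omega)]

lemma le2.sub_mod_two_pow {u v : ℕ} (h : le2 u v) (m : ℕ) :
    (v - u) % 2 ^ m = v % 2 ^ m - u % 2 ^ m :=
  Nat.sub_mod_of_le_of_mod_le h.le (h.mod_two_pow m).le

/-- `hr` makes the truncated subtraction `(t+1)·2^ℓ − r'` in `Sset` harmless. -/
lemma mem_Sset_iff {ℓ r t a b : ℕ} (hr : r < 2 ^ ℓ) :
    (a, b) ∈ Sset ℓ r t ↔ a < 2 ^ ℓ ∧ b < 2 ^ ℓ ∧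
      ∃ i j r' : ℕ, le2 i b ∧ le2 j (b - i) ∧ 1 ≤ r' ∧ r' ≤ r ∧
        2 * i + j + a + r' = (t + 1) * 2 ^ ℓ := by
  have hpos : 0 < 2 ^ ℓ := Nat.two_pow_pos ℓ
  have hle : 2 ^ ℓ ≤ (t + 1) * 2 ^ ℓ := Nat.le_mul_of_pos_left _ t.succ_pos
  simp only [Sset, Set.mem_ofPred_eq]
  refine and_congr (by omega) (and_congr (by omega) ?_)
  refine exists₃_congr fun i j r' => and_congr_right fun _ => and_congr_right fun _ => ?_
  constructor <;> rintro ⟨h1, h2, h3⟩ <;> exact ⟨h1, h2, by omega⟩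

lemma mem_Sset_union_of_two_pow_dvd {m r a b i j r' : ℕ} (hr : r < 2 ^ m)
    (ha : a < 2 ^ m) (hb : b < 2 ^ m) (hi : le2 i b) (hj : le2 j (b - i))
    (hr'1 : 1 ≤ r') (hr'2 : r' ≤ r) (hdvd : 2 ^ m ∣ 2 * i + j + a + r') :
    (a, b) ∈ Sset m r 0 ∪ Sset m r 1 ∪ Sset m r 2 := by
  obtain ⟨k, hk⟩ := hdvd
  have hij : i + j ≤ b := by have := hi.le; have := hj.le; omega
  have hk_pos : 0 < k := Nat.pos_of_ne_zero fun h => by simp [h] at hk; omega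
  have hk_lt : k < 4 := by
    by_contra! h
    have := Nat.mul_le_mul_left (2 ^ m) h
    omega
  have hmem : ∀ t, k = t + 1 → (a, b) ∈ Sset m r t := fun t ht =>
    (mem_Sset_iff hr).2 ⟨ha, hb, i, j, r', hi, hj, hr'1, hr'2, by rw [hk, ht, mul_comm]⟩
  obtain rfl | rfl | rfl : k = 1 ∨ k = 2 ∨ k = 3 := by omega
  exacts [Or.inl (Or.inl (hmem 0 rfl)), Or.inl (Or.inr (hmem 1 rfl)), Or.inr (hmem 2 rfl)]

theorem stmt_11_general (ℓ r : ℕ) (hr2 : 2 * r < 2 ^ ℓ)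
    (a b : ℕ) (hab : (a, b) ∈ Sset ℓ r 0 ∪ Sset ℓ r 1 ∪ Sset ℓ r 2) :
    (a % 2 ^ (ℓ - 1), b % 2 ^ (ℓ - 1)) ∈
      Sset (ℓ - 1) r 0 ∪ Sset (ℓ - 1) r 1 ∪ Sset (ℓ - 1) r 2 := by
  obtain ⟨t, hab⟩ : ∃ t, (a, b) ∈ Sset ℓ r t := by
    rcases hab with (h | h) | h <;> exact ⟨_, h⟩
  obtain ⟨-, -, i, j, r', hi, hj, hr'1, hr'2, hsum⟩ := (mem_Sset_iff (by omega)).1 hab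
  have hℓ : ℓ ≠ 0 := by rintro rfl; omega
  have hpow : 2 ^ ℓ = 2 * 2 ^ (ℓ - 1) := by rw [← pow_succ', Nat.sub_add_cancel (by omega)]
  set Q := 2 ^ (ℓ - 1)
  have hmodeq : 2 * (i % Q) + j % Q + a % Q + r' ≡ 2 * i + j + a + r' [MOD Q] :=
    ((((Nat.mod_modEq i Q).mul_left 2).add (Nat.mod_modEq j Q)).add (Nat.mod_modEq a Q)).add_right r'
  refine mem_Sset_union_of_two_pow_dvd (by omega) (Nat.mod_lt _ Q.pos_of_neZero)
    (Nat.mod_lt _ Q.pos_of_neZero) (hi.mod_two_pow _) ((hi.sub_mod_two_pow _) ▸ hj.mod_two_pow _)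
    hr'1 hr'2 ?_
  rw [hmodeq.dvd_iff dvd_rfl, hsum, hpow]
  exact ⟨(t + 1) * 2, by ring⟩

/-- If `(a, b) ∈ S₀(ℓ;r) ∪ S₁(ℓ;r) ∪ S₂(ℓ;r)` then dropping the most
significant bits, `(a mod 2^{ℓ−1}, b mod 2^{ℓ−1}) ∈ S₀(ℓ−1;r) ∪ S₁(ℓ−1;r) ∪ S₂(ℓ−1;r)`. -/
theorem stmt_11 (ℓ r : ℕ) (hℓ : 2 ≤ ℓ) (hr1 : 1 ≤ r) (hr2 : 2 * r < 2 ^ ℓ)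
    (a b : ℕ) (hab : (a, b) ∈ Sset ℓ r 0 ∪ Sset ℓ r 1 ∪ Sset ℓ r 2) :
    (a % 2 ^ (ℓ - 1), b % 2 ^ (ℓ - 1)) ∈
      Sset (ℓ - 1) r 0 ∪ Sset (ℓ - 1) r 1 ∪ Sset (ℓ - 1) r 2 :=
  stmt_11_general ℓ r hr2 a b hab
end

section
/- Let ℓ ≥ 2, q = 2^ℓ, let r be an integer with 1 ≤ r ≤ q/4, and set s = ⌈log₂ r⌉. Then |S*(ℓ; r)| < 4r² · |S_0(ℓ − s; 3)|. Moreover, if r is a power of 2 (so that s = log₂ r), then |S*(ℓ; r)| ≤ r² · |S_0(ℓ − s; 3)|. -/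
/-- The set `S*(ℓ; r)` of pairs `(a, b)` with `0 ≤ a, b ≤ 2^ℓ − 1` for which there exist
`i ≤₂ b`, `j ≤₂ (b − i)`, `t ≥ 0` and `1 ≤ r' ≤ r` with
`2i + j + a = 2^ℓ − r' + t·(2^ℓ − 1)`. -/
def SstarSet (ℓ r : ℕ) : Set (ℕ × ℕ) :=
  {p | p.1 ≤ 2 ^ ℓ - 1 ∧ p.2 ≤ 2 ^ ℓ - 1 ∧
    ∃ i j t r' : ℕ, le2 i p.2 ∧ le2 j (p.2 - i) ∧ 1 ≤ r' ∧ r' ≤ r ∧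
      2 * i + j + p.1 = 2 ^ ℓ - r' + t * (2 ^ ℓ - 1)}

/-!
Call `v` a shadow value of `b` if `v = 2i + j` with `i ≤₂ b` and `j ≤₂ b - i`. Over `b < 2^ℓ`,
a shadow value `v ≥ 2^ℓ - 1` can be lowered to another one by `2^ℓ - 1` or `2^ℓ`: remove the top
digit of `b` from `i`, or from `j` and recurse on the lower digits. Each such step undoes one
wrap-around `t` at the cost of raising `r'` by at most one, and `2i + j + a < 3 · 2^ℓ` allows at
most two wrap-arounds, so `S*(ℓ; r)` lies in `S_0(ℓ; r + 2)`. Cutting `a` and the shadow value at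
the `s`-th binary digit, the high digits satisfy the equation of `S_0(ℓ - s; 3)`, with the carry
out of the low digits in the role of `r'`; it is at most `3` because `r ≤ 2^s`. So
`(a, b) ↦ (a / 2^s, b / 2^s)` maps `S*(ℓ; r)` into `S_0(ℓ - s; 3)` with fibres of size at most
`(2^s)^2`, and `2^s < 2r`, with `2^s = r` when `r` is a power of two.
-/

lemma le2_zero_left (v : ℕ) : le2 0 v := by
  simp [le2]

lemma le2_two_pow_mul_add_iff {n a b x y : ℕ} (hx : x < 2 ^ n) (hy : y < 2 ^ n) :
    le2 (2 ^ n * a + x) (2 ^ n * b + y) ↔ le2 a b ∧ le2 x y := by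
  simp only [le2, Nat.testBit_two_pow_mul_add _ hx, Nat.testBit_two_pow_mul_add _ hy]
  refine ⟨fun h => ⟨fun k hk => ?_, fun k hk => ?_⟩, fun ⟨hab, hxy⟩ k => ?_⟩
  · simpa using h (k + n) (by simpa using hk)
  · have hkn : k < n := by
      by_contra hkn
      rw [Nat.testBit_lt_two_pow (hx.trans_le (Nat.pow_le_pow_right two_pos (not_lt.1 hkn)))] at hk
      exact Bool.false_ne_true hk
    simpa [hkn] using h k (by simpa [hkn] using hk)
  · split_ifs
    exacts [hxy k, hab (k - n)]

lemma mul_add_sub_mul_add {N a b x y : ℕ} (hab : a ≤ b) (hxy : x ≤ y) :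
    N * b + y - (N * a + x) = N * (b - a) + (y - x) := by
  rw [Nat.mul_sub]
  have := Nat.mul_le_mul_left N hab
  omega

def IsShadowValue (b v : ℕ) : Prop :=
  ∃ i j, le2 i b ∧ le2 j (b - i) ∧ 2 * i + j = v

lemma isShadowValue_zero (b : ℕ) : IsShadowValue b 0 :=
  ⟨0, 0, le2_zero_left b, le2_zero_left _, rfl⟩

lemma IsShadowValue.le_two_mul {b v : ℕ} (h : IsShadowValue b v) : v ≤ 2 * b := by
  obtain ⟨i, j, hi, hj, rfl⟩ := h
  have := hi.le
  have := hj.le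
  omega

lemma isShadowValue_two_pow_mul_add_iff {n b y v : ℕ} (hy : y < 2 ^ n) :
    IsShadowValue (2 ^ n * b + y) v ↔
      ∃ w u, IsShadowValue b w ∧ IsShadowValue y u ∧ v = 2 ^ n * w + u := by
  have hN : 0 < 2 ^ n := Nat.two_pow_pos n
  constructor
  · rintro ⟨i, j, hi, hj, rfl⟩
    rw [← Nat.div_add_mod i (2 ^ n), le2_two_pow_mul_add_iff (Nat.mod_lt _ hN) hy] at hi
    rw [← Nat.div_add_mod i (2 ^ n), mul_add_sub_mul_add hi.1.le hi.2.le,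
      ← Nat.div_add_mod j (2 ^ n),
      le2_two_pow_mul_add_iff (Nat.mod_lt _ hN) ((Nat.sub_le _ _).trans_lt hy)] at hj
    refine ⟨2 * (i / 2 ^ n) + j / 2 ^ n, 2 * (i % 2 ^ n) + j % 2 ^ n,
      ⟨_, _, hi.1, hj.1, rfl⟩, ⟨_, _, hi.2, hj.2, rfl⟩, ?_⟩
    conv_lhs => rw [← Nat.div_add_mod i (2 ^ n), ← Nat.div_add_mod j (2 ^ n)]
    ring
  · rintro ⟨_, _, ⟨i₁, j₁, hi₁, hj₁, rfl⟩, ⟨i₀, j₀, hi₀, hj₀, rfl⟩, rfl⟩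
    have hi₀N : i₀ < 2 ^ n := hi₀.le.trans_lt hy
    have hj₀N : j₀ < 2 ^ n := hj₀.le.trans_lt ((Nat.sub_le _ _).trans_lt hy)
    refine ⟨2 ^ n * i₁ + i₀, 2 ^ n * j₁ + j₀, ?_, ?_, by ring⟩
    · exact (le2_two_pow_mul_add_iff hi₀N hy).2 ⟨hi₁, hi₀⟩
    · rw [mul_add_sub_mul_add hi₁.le hi₀.le]
      exact (le2_two_pow_mul_add_iff hj₀N ((Nat.sub_le _ _).trans_lt hy)).2 ⟨hj₁, hj₀⟩

lemma IsShadowValue.of_mod_two_pow {n b u : ℕ} (h : IsShadowValue (b % 2 ^ n) u) :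
    IsShadowValue b u := by
  rw [← Nat.div_add_mod b (2 ^ n),
    isShadowValue_two_pow_mul_add_iff (Nat.mod_lt _ (Nat.two_pow_pos n))]
  exact ⟨0, u, isShadowValue_zero _, h, by simp⟩

lemma IsShadowValue.exists_sub_two_pow {ℓ b v : ℕ} (hb : b < 2 ^ ℓ) (hv : IsShadowValue b v)
    (hvℓ : 2 ^ ℓ - 1 ≤ v) :
    ∃ w d, IsShadowValue b w ∧ d ≤ 1 ∧ w + (2 ^ ℓ - 1) + d = v := by
  induction ℓ generalizing b v with
  | zero =>
    have := hv.le_two_mul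
    exact ⟨0, 0, isShadowValue_zero b, zero_le_one, by simp at hb; omega⟩
  | succ ℓ ih =>
    have hP : 0 < 2 ^ ℓ := Nat.two_pow_pos ℓ
    rw [pow_succ] at hb hvℓ ⊢
    have hβ : b / 2 ^ ℓ < 2 := Nat.div_lt_of_lt_mul (by omega)
    rw [← Nat.div_add_mod b (2 ^ ℓ), isShadowValue_two_pow_mul_add_iff (Nat.mod_lt _ hP)] at hv
    obtain ⟨w₁, u, hw₁, hu, rfl⟩ := hv
    have hw₁2 := hw₁.le_two_mul
    have hu2 := hu.le_two_mul
    have hbP := Nat.mod_lt b hP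
    rcases (by omega : w₁ = 0 ∨ w₁ = 1 ∨ w₁ = 2) with rfl | rfl | rfl
    · omega
    · -- the top digit of `b` sits in `j`: descend in the lower digits
      obtain ⟨w, d, hw, hd, hwu⟩ := ih hbP hu (by omega)
      exact ⟨w, d, hw.of_mod_two_pow, hd, by rw [← hwu]; omega⟩
    · exact ⟨u, 1, hu.of_mod_two_pow, le_rfl, by omega⟩

lemma IsShadowValue.exists_add_add_eq_two_pow {ℓ a b v r t : ℕ} (hb : b < 2 ^ ℓ)
    (ha : a < 2 ^ ℓ) (hv : IsShadowValue b v) (hr : 1 ≤ r)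
    (h : v + a + r = 2 ^ ℓ + t * (2 ^ ℓ - 1)) :
    ∃ w r', IsShadowValue b w ∧ 1 ≤ r' ∧ r' ≤ r + t ∧ w + a + r' = 2 ^ ℓ := by
  induction t generalizing v r with
  | zero => exact ⟨v, r, hv, hr, by omega, by simpa using h⟩
  | succ t ih =>
    rw [add_one_mul] at h
    by_cases hvℓ : 2 ^ ℓ - 1 ≤ v
    · obtain ⟨w, d, hw, hd, rfl⟩ := hv.exists_sub_two_pow hb hvℓ
      obtain ⟨w', r', hw', hr', hr't, hw'a⟩ := ih hw (r := r + d) (by omega) (by omega)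
      exact ⟨w', r', hw', hr', by omega, hw'a⟩
    · -- `v < 2 ^ ℓ - 1` forces `r ≥ 2 ^ ℓ - a`, so `w = 0` already works
      exact ⟨0, 2 ^ ℓ - a, isShadowValue_zero b, by omega, by omega, by omega⟩

lemma mk_mem_sset_zero {m a b v c r : ℕ} (ha : a < 2 ^ m) (hb : b < 2 ^ m)
    (hv : IsShadowValue b v) (hc : 1 ≤ c) (hcr : c ≤ r) (h : v + a + c = 2 ^ m) :
    (a, b) ∈ Sset m r 0 := by
  obtain ⟨i, j, hi, hj, rfl⟩ := hv
  exact ⟨by omega, by omega, i, j, c, hi, hj, hc, hcr, by omega⟩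

lemma sset_finite (ℓ r t : ℕ) : (Sset ℓ r t).Finite :=
  ((Set.finite_Iic _).prod (Set.finite_Iic _)).subset fun _ hp => ⟨hp.1, hp.2.1⟩

lemma sset_zero_nonempty (m r : ℕ) (hr : 1 ≤ r) : (Sset m r 0).Nonempty :=
  ⟨_, mk_mem_sset_zero (Nat.sub_lt (Nat.two_pow_pos m) one_pos) (Nat.two_pow_pos m)
    (isShadowValue_zero 0) le_rfl hr (by have := Nat.two_pow_pos m; omega)⟩

lemma exists_add_add_eq_two_pow_of_mem_sstarSet {ℓ r a b : ℕ} (hr : r < 2 ^ ℓ)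
    (hab : (a, b) ∈ SstarSet ℓ r) :
    a < 2 ^ ℓ ∧ b < 2 ^ ℓ ∧
      ∃ w r', IsShadowValue b w ∧ 1 ≤ r' ∧ r' ≤ r + 2 ∧ w + a + r' = 2 ^ ℓ := by
  obtain ⟨ha, hb, i, j, t, r', hi, hj, hr', hr'r, h⟩ := hab
  have hv : IsShadowValue b (2 * i + j) := ⟨i, j, hi, hj, rfl⟩
  have hvb := hv.le_two_mul
  have ht : t ≤ 2 := by
    by_contra! ht
    have := Nat.mul_le_mul_right (2 ^ ℓ - 1) ht
    omega
  obtain ⟨w, r'', hw, hr'', hr''r, hwa⟩ :=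
    hv.exists_add_add_eq_two_pow (ℓ := ℓ) (a := a) (t := t) (by omega) (by omega) hr' (by omega)
  exact ⟨by omega, by omega, w, r'', hw, hr'', by omega, hwa⟩

lemma exists_add_eq_of_mul_add_eq_mul {S x y M : ℕ} (h : S * x + y = S * M) (hy : 0 < y)
    (hyS : y < 4 * S) : ∃ c, 1 ≤ c ∧ c ≤ 3 ∧ x + c = M := by
  have hxM : x < M := Nat.lt_of_mul_lt_mul_left (a := S) (by omega)
  have hc : S * (M - x) = y := by rw [Nat.mul_sub]; omega
  have : M - x < 4 := Nat.lt_of_mul_lt_mul_left (a := S) (by rw [hc]; linarith)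
  exact ⟨M - x, by omega, by omega, by omega⟩

lemma div_two_pow_mem_sset {ℓ s a b v r : ℕ} (hs : s ≤ ℓ) (ha : a < 2 ^ ℓ) (hb : b < 2 ^ ℓ)
    (hv : IsShadowValue b v) (hr : 1 ≤ r) (hrs : r ≤ 2 ^ s + 2) (h : v + a + r = 2 ^ ℓ) :
    (a / 2 ^ s, b / 2 ^ s) ∈ Sset (ℓ - s) 3 0 := by
  have hS : 0 < 2 ^ s := Nat.two_pow_pos s
  have hℓ : 2 ^ ℓ = 2 ^ s * 2 ^ (ℓ - s) := by rw [← pow_add, Nat.add_sub_cancel' hs]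
  rw [← Nat.div_add_mod b (2 ^ s), isShadowValue_two_pow_mul_add_iff (Nat.mod_lt _ hS)] at hv
  obtain ⟨w, u, hw, hu, rfl⟩ := hv
  have hu2 := hu.le_two_mul
  have hbS := Nat.mod_lt b hS
  have haS := Nat.mod_lt a hS
  -- split `v + a + r = 2 ^ ℓ` into high digits and a carry `c` out of the low `s` digits
  obtain ⟨c, hc1, hc3, hc⟩ := exists_add_eq_of_mul_add_eq_mul (S := 2 ^ s) (x := w + a / 2 ^ s)
    (y := u + a % 2 ^ s + r) (M := 2 ^ (ℓ - s))
    (by rw [← hℓ, ← h, mul_add]; have := Nat.div_add_mod a (2 ^ s); omega) (by omega) (by omega)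
  exact mk_mem_sset_zero (Nat.div_lt_of_lt_mul (hℓ ▸ ha)) (Nat.div_lt_of_lt_mul (hℓ ▸ hb)) hw
    hc1 hc3 (by omega)

lemma div_two_pow_mem_sset_of_mem_sstarSet {ℓ s r : ℕ} (hs : s ≤ ℓ) (hrs : r ≤ 2 ^ s)
    (hr : r < 2 ^ ℓ) {p : ℕ × ℕ} (hp : p ∈ SstarSet ℓ r) :
    (p.1 / 2 ^ s, p.2 / 2 ^ s) ∈ Sset (ℓ - s) 3 0 := by
  obtain ⟨ha, hb, w, r', hw, hr', hr'r, h⟩ := exists_add_add_eq_two_pow_of_mem_sstarSet hr hp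
  exact div_two_pow_mem_sset hs ha hb hw hr' (by omega) h

lemma ncard_le_sq_mul_ncard_of_div_mem {A B : Set (ℕ × ℕ)} {S : ℕ} (hS : 0 < S)
    (hB : B.Finite) (h : ∀ p ∈ A, (p.1 / S, p.2 / S) ∈ B) : A.ncard ≤ S ^ 2 * B.ncard := by
  have hinj : Set.InjOn (fun p : ℕ × ℕ => ((p.1 / S, p.2 / S), (p.1 % S, p.2 % S))) A := by
    rintro ⟨a, b⟩ - ⟨a', b'⟩ - hp
    simp only [Prod.mk.injEq] at hp
    rw [← Nat.div_add_mod a S, ← Nat.div_add_mod b S, hp.1.1, hp.1.2, hp.2.1, hp.2.2,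
      Nat.div_add_mod, Nat.div_add_mod]
  calc A.ncard ≤ (B ×ˢ (Set.Iio S ×ˢ Set.Iio S)).ncard :=
        Set.ncard_le_ncard_of_injOn _
          (fun p hp => ⟨h p hp, Nat.mod_lt _ hS, Nat.mod_lt _ hS⟩) hinj
          (hB.prod ((Set.finite_Iio S).prod (Set.finite_Iio S)))
    _ = S ^ 2 * B.ncard := by simp [Set.ncard_prod, sq, mul_comm]

lemma two_pow_clog_lt_two_mul {r : ℕ} (hr : 1 ≤ r) : 2 ^ Nat.clog 2 r < 2 * r := by
  rcases hs : Nat.clog 2 r with _ | s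
  · omega
  · have := Nat.pow_lt_of_lt_clog (b := 2) (x := r) (y := s) (by omega)
    rw [pow_succ]
    omega

theorem stmt_14_general (ℓ r : ℕ) (hr1 : 1 ≤ r) (hr4 : 4 * r ≤ 2 ^ ℓ) :
    Nat.card ↥(SstarSet ℓ r) <
        4 * r ^ 2 * Nat.card ↥(Sset (ℓ - Nat.clog 2 r) 3 0) ∧
      ((∃ m : ℕ, r = 2 ^ m) →
        Nat.card ↥(SstarSet ℓ r) ≤
          r ^ 2 * Nat.card ↥(Sset (ℓ - Nat.clog 2 r) 3 0)) := by
  simp only [Nat.card_coe_set_eq]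
  have hrs : r ≤ 2 ^ Nat.clog 2 r := Nat.le_pow_clog one_lt_two r
  have hcard : (SstarSet ℓ r).ncard ≤
      (2 ^ Nat.clog 2 r) ^ 2 * (Sset (ℓ - Nat.clog 2 r) 3 0).ncard :=
    ncard_le_sq_mul_ncard_of_div_mem (Nat.two_pow_pos _) (sset_finite _ _ _)
      fun p hp => div_two_pow_mem_sset_of_mem_sstarSet
        (Nat.clog_le_of_le_pow (by omega)) hrs (by omega) hp
  refine ⟨hcard.trans_lt ?_, ?_⟩
  · have hsq : (2 ^ Nat.clog 2 r) ^ 2 < 4 * r ^ 2 := by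
      have := two_pow_clog_lt_two_mul hr1
      nlinarith
    exact Nat.mul_lt_mul_of_pos_right hsq
      ((Set.ncard_pos (sset_finite _ _ _)).2 (sset_zero_nonempty _ _ (by norm_num)))
  · rintro ⟨m, rfl⟩
    simpa [Nat.clog_pow] using hcard

/-- With `s = ⌈log₂ r⌉`, `|S*(ℓ; r)| < 4r²·|S₀(ℓ−s; 3)|`; and if `r`
is a power of two then `|S*(ℓ; r)| ≤ r²·|S₀(ℓ−s; 3)|`. -/
theorem stmt_14 (ℓ r : ℕ) (hℓ : 2 ≤ ℓ) (hr1 : 1 ≤ r) (hr4 : 4 * r ≤ 2 ^ ℓ) :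
    Nat.card ↥(SstarSet ℓ r) <
        4 * r ^ 2 * Nat.card ↥(Sset (ℓ - Nat.clog 2 r) 3 0) ∧
      ((∃ m : ℕ, r = 2 ^ m) →
        Nat.card ↥(SstarSet ℓ r) ≤
          r ^ 2 * Nat.card ↥(Sset (ℓ - Nat.clog 2 r) 3 0)) :=
  stmt_14_general ℓ r hr1 hr4
end

section
/- Let a, b, B be real numbers and c a positive integer with 1 ≤ a < b and c·a ≤ B ≤ c·b, and let f : ℝ → ℝ be convex and non-decreasing on the interval [a, b]. Then for every multiset M of c real numbers, each lying in [a, b], whose sum equals B, one has Σ_{m ∈ M} f(m) ≤ ((B − c·a)/(b − a) + 1)·(f(b) − f(a)) + c·f(a). -/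
/-! On `[a, b]` a convex `f` lies below its secant through `a` and `b`, which is affine, so summing
over `M` bounds `∑ f` by `c f(a) + (B - c a)/(b - a) · (f b - f a)`; monotonicity makes the extra
term `f b - f a` of the stated bound non-negative. -/

open Set

section Secant

variable {𝕜 : Type*} [Field 𝕜] [LinearOrder 𝕜] [IsStrictOrderedRing 𝕜] {s : Set 𝕜} {f : 𝕜 → 𝕜}

theorem ConvexOn.le_secant (hf : ConvexOn 𝕜 s f) {a b x : 𝕜} (ha : a ∈ s) (hb : b ∈ s)
    (hx : x ∈ Icc a b) : f x ≤ f a + (x - a) * ((f b - f a) / (b - a)) := by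
  obtain ⟨hax, hxb⟩ := hx
  rcases hax.eq_or_lt with rfl | hax
  · simp
  have hxs : x ∈ s := hf.1.ordConnected.out ha hb ⟨hax.le, hxb⟩
  have hslope := hf.secant_mono ha hxs hb hax.ne' (hax.trans_le hxb).ne' hxb
  rw [div_le_iff₀ (sub_pos.2 hax)] at hslope
  linarith

theorem ConvexOn.multiset_sum_map_le_secant (hf : ConvexOn 𝕜 s f) {a b : 𝕜} (ha : a ∈ s)
    (hb : b ∈ s) {M : Multiset 𝕜} (hM : ∀ x ∈ M, x ∈ Icc a b) :
    (M.map f).sum ≤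
      Multiset.card M * f a + (M.sum - Multiset.card M * a) * ((f b - f a) / (b - a)) := by
  calc (M.map f).sum ≤ (M.map fun x ↦ f a + (x - a) * ((f b - f a) / (b - a))).sum :=
        Multiset.sum_map_le_sum_map _ _ fun x hx ↦ hf.le_secant ha hb (hM x hx)
    _ = _ := by
        simp [Multiset.sum_map_add, Multiset.sum_map_mul_right, Multiset.sum_map_sub]

end Secant

theorem stmt_16_general (a b B : ℝ) (c : ℕ) (hab : a < b)
    (f : ℝ → ℝ) (hconv : ConvexOn ℝ (Set.Icc a b) f)
    (hmono : MonotoneOn f (Set.Icc a b))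
    (M : Multiset ℝ) (hcard : Multiset.card M = c)
    (hmem : ∀ x ∈ M, x ∈ Set.Icc a b) (hsum : M.sum = B) :
    (M.map f).sum ≤ ((B - c * a) / (b - a) + 1) * (f b - f a) + c * f a := by
  have ha : a ∈ Icc a b := left_mem_Icc.2 hab.le
  have hb : b ∈ Icc a b := right_mem_Icc.2 hab.le
  have hfab : f a ≤ f b := hmono ha hb hab.le
  have hsecant := hconv.multiset_sum_map_le_secant ha hb hmem
  rw [hcard, hsum] at hsecant
  calc (M.map f).sum ≤ c * f a + (B - c * a) * ((f b - f a) / (b - a)) := hsecant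
    _ = c * f a + (B - c * a) / (b - a) * (f b - f a) := by ring
    _ ≤ _ := by linarith

/-- Maximization of a convex non-decreasing function over multisets of
`c` reals in `[a, b]` with fixed sum `B`. -/
theorem stmt_16 (a b B : ℝ) (c : ℕ) (hc : 0 < c)
    (ha : 1 ≤ a) (hab : a < b)
    (hBl : (c : ℝ) * a ≤ B) (hBu : B ≤ (c : ℝ) * b)
    (f : ℝ → ℝ) (hconv : ConvexOn ℝ (Set.Icc a b) f)
    (hmono : MonotoneOn f (Set.Icc a b))
    (M : Multiset ℝ) (hcard : Multiset.card M = c)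
    (hmem : ∀ x ∈ M, x ∈ Set.Icc a b) (hsum : M.sum = B) :
    (M.map f).sum ≤ ((B - c * a) / (b - a) + 1) * (f b - f a) + c * f a :=
  stmt_16_general a b B c hab f hconv hmono M hcard hmem hsum
end

section
/- Let F ⊆ K be finite fields with K an extension field of F, let n ≥ 1 and 0 ≤ w ≤ n be integers, and let C ⊆ K^n be a linear code (a K-linear subspace). Let A_w = |{c ∈ C : wt_H(c) = w}| be its w-th Hamming weight enumerator. Then Σ_{v ∈ (K*)^n} |{ c ⋆ v : c ∈ C, wt_H(c) = w } ∩ F^n| = A_w · (|K| − 1)^{n−w} · (|F| − 1)^w, where the sum runs over all vectors v of length n with all entries in K* = K \ {0}, c ⋆ v = (c₁v₁, …, c_nv_n) denotes the entry-wise product, and F^n is regarded as a subset of K^n via the inclusion F ⊆ K. -/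
open Finset

lemma aux_card_ne_zero (K : Type*) [Field K] [Fintype K] [DecidableEq K] :
    Fintype.card {y : K // y ≠ 0} = Fintype.card K - 1 := by
  have h1 : Fintype.card {y : K // y = 0} = 1 := Fintype.card_subtype_eq (0 : K)
  have := Fintype.card_subtype_compl (fun y : K => y = 0)
  simpa [h1] using this

lemma aux_card_cond (F K : Type*) [Field F] [Field K] [Algebra F K]
    [Fintype F] [Fintype K] [DecidableEq K] (a : K) :
    Fintype.card {y : K // y ≠ 0 ∧ a * y ∈ Set.range (algebraMap F K)} =
      if a = 0 then Fintype.card K - 1 else Fintype.card F - 1 := by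
  classical
  split_ifs with ha
  · subst ha
    have : ∀ y : K, (y ≠ 0 ∧ (0:K) * y ∈ Set.range (algebraMap F K)) ↔ y ≠ 0 := by
      intro y
      constructor
      · exact fun h => h.1
      · exact fun h => ⟨h, ⟨0, by simp⟩⟩
    rw [Fintype.card_congr (Equiv.subtypeEquivRight this)]
    exact aux_card_ne_zero K
  · have hinj : Function.Injective (algebraMap F K) := (algebraMap F K).injective
    have e : {b : F // b ≠ 0} ≃ {y : K // y ≠ 0 ∧ a * y ∈ Set.range (algebraMap F K)} := by
      refine Equiv.ofBijective (fun b => ⟨a⁻¹ * algebraMap F K b.1, ?_, ?_⟩) ⟨?_, ?_⟩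
      · have : algebraMap F K b.1 ≠ 0 := by
          simp [map_eq_zero, b.2]
        exact mul_ne_zero (inv_ne_zero ha) this
      · refine ⟨b.1, ?_⟩
        field_simp
      · intro b b' h
        simp only [Subtype.mk.injEq] at h
        have := mul_left_cancel₀ (inv_ne_zero ha) h
        exact Subtype.ext (hinj this)
      · rintro ⟨y, hy, b, hb⟩
        refine ⟨⟨b, ?_⟩, ?_⟩
        · rintro rfl
          rw [map_zero] at hb
          exact (mul_ne_zero ha hy) hb.symm
        · refine Subtype.ext ?_
          show a⁻¹ * algebraMap F K b = y
          rw [hb, inv_mul_cancel_left₀ ha]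
    rw [← Fintype.card_congr e]
    have h1 : Fintype.card {b : F // b = 0} = 1 := Fintype.card_subtype_eq (0 : F)
    have := Fintype.card_subtype_compl (fun b : F => b = 0)
    simpa [h1] using this

/-- For a linear code `C ⊆ K^n` over a finite extension `K` of a finite
field `F`, the total number, over all column-multiplier vectors `v ∈ (K*)^n`, of vectors
in `F^n` of the form `c ⋆ v` with `c ∈ C` of Hamming weight `w`, equals
`A_w · (|K| − 1)^{n−w} · (|F| − 1)^w`. -/
theorem stmt_17 (F K : Type*) [Field F] [Field K] [Algebra F K]
    [Fintype F] [Fintype K] [DecidableEq K]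
    (n w : ℕ) (hn : 1 ≤ n) (hw : w ≤ n)
    (C : Submodule K (Fin n → K)) :
    ∑ v ∈ Finset.univ.filter (fun v : Fin n → K => ∀ i, v i ≠ 0),
        Nat.card {x : Fin n → K //
          (∃ c ∈ C, hammingNorm c = w ∧ x = fun i => c i * v i) ∧
            ∀ i, x i ∈ Set.range (algebraMap F K)} =
      Nat.card {c : Fin n → K // c ∈ C ∧ hammingNorm c = w} *
        (Fintype.card K - 1) ^ (n - w) * (Fintype.card F - 1) ^ w := by
  classical
  set R : Set K := Set.range (algebraMap F K) with hR
  set S : Finset (Fin n → K) := univ.filter (fun c => c ∈ C ∧ hammingNorm c = w) with hS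
  set V : Finset (Fin n → K) := univ.filter (fun v : Fin n → K => ∀ i, v i ≠ 0) with hV
  -- Step A : rewrite each summand
  have hA : ∀ v ∈ V, Nat.card {x : Fin n → K //
      (∃ c ∈ C, hammingNorm c = w ∧ x = fun i => c i * v i) ∧
        ∀ i, x i ∈ Set.range (algebraMap F K)} =
      (S.filter (fun c => ∀ i, c i * v i ∈ R)).card := by
    intro v hv
    have hvne : ∀ i, v i ≠ 0 := by simpa [hV] using hv
    rw [Nat.card_eq_fintype_card, Fintype.card_subtype]
    symm
    refine Finset.card_bij (fun c _ => fun j => c j * v j) ?_ ?_ ?_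
    · intro c hc
      simp only [mem_filter, mem_univ, true_and, hS] at hc ⊢
      exact ⟨⟨c, hc.1.1, hc.1.2, rfl⟩, hc.2⟩
    · intro c hc c' hc' h
      funext j
      have := congrFun h j
      exact mul_right_cancel₀ (hvne j) this
    · intro x hx
      simp only [mem_filter, mem_univ, true_and] at hx
      obtain ⟨⟨c, hcC, hcw, rfl⟩, hxR⟩ := hx
      refine ⟨c, ?_, rfl⟩
      simp only [mem_filter, mem_univ, true_and, hS]
      exact ⟨⟨hcC, hcw⟩, fun i => hxR i⟩
  rw [Finset.sum_congr rfl hA]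
  -- Step B : swap sums
  have hB : ∑ v ∈ V, (S.filter (fun c => ∀ i, c i * v i ∈ R)).card
      = ∑ c ∈ S, (V.filter (fun v => ∀ i, c i * v i ∈ R)).card := by
    simp_rw [Finset.card_filter]
    exact Finset.sum_comm
  rw [hB]
  -- Step C : count v's for a fixed c
  have hC : ∀ c ∈ S, (V.filter (fun v => ∀ i, c i * v i ∈ R)).card
      = (Fintype.card K - 1) ^ (n - w) * (Fintype.card F - 1) ^ w := by
    intro c hc
    have hcw : hammingNorm c = w := by
      simp only [hS, mem_filter, mem_univ, true_and] at hc; exact hc.2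
    have hfilter : V.filter (fun v => ∀ i, c i * v i ∈ R)
        = univ.filter (fun v : Fin n → K => ∀ i, v i ≠ 0 ∧ c i * v i ∈ R) := by
      ext v
      simp only [hV, mem_filter, mem_univ, true_and, and_assoc]
      constructor
      · rintro ⟨h1, h2⟩; exact fun i => ⟨h1 i, h2 i⟩
      · intro h; exact ⟨fun i => (h i).1, fun i => (h i).2⟩
    rw [hfilter, ← Fintype.card_subtype]
    rw [Fintype.card_congr (Equiv.subtypePiEquivPi
      (p := fun i (y : K) => y ≠ 0 ∧ c i * y ∈ R))]
    rw [Fintype.card_pi]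
    have hcard : ∀ i, Fintype.card {y : K // y ≠ 0 ∧ c i * y ∈ R}
        = if c i = 0 then Fintype.card K - 1 else Fintype.card F - 1 := fun i =>
      aux_card_cond F K (c i)
    rw [Finset.prod_congr rfl (fun i _ => hcard i)]
    rw [Finset.prod_ite, Finset.prod_const, Finset.prod_const]
    have hne : (univ.filter fun i => ¬ c i = 0).card = w := by
      simpa [hammingNorm] using hcw
    have htot := Finset.card_filter_add_card_filter_not
      (s := (univ : Finset (Fin n))) (fun i => c i = 0)
    have heq : (univ.filter fun i => c i = 0).card = n - w := by
      rw [hne, card_univ, Fintype.card_fin] at htot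
      exact Nat.eq_sub_of_add_eq htot
    rw [hne, heq]
  rw [Finset.sum_congr rfl hC, Finset.sum_const, smul_eq_mul]
  rw [Nat.card_eq_fintype_card, Fintype.card_subtype]
  ring
end

section
/- Let q be a prime power, let s ≥ 1, n ≥ 1 and 0 ≤ k ≤ n be integers, and let A ⊆ F_q^n be a k-dimensional linear code with A_n = |{c ∈ A : wt_H(c) = n}| codewords of full Hamming weight n. Let N be the number of s × n matrices over F_q having no zero column, all of whose rows belong to A. Then (q−1)·N ≤ q^{ks}·(q−1) − (q^s − 1)·(q^k − 1 − A_n) − (q−1). Equivalently, for a matrix E drawn uniformly at random from the (q^s − 1)^n matrices in F_q^{s×n} without zero columns, the probability that every row of E lies in A is at most (q^{ks}(q−1) − (q^s−1)(q^k−1−A_n) − (q−1)) / ((q−1)(q^s−1)^n). -/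
private lemma card_split18 {α : Type*} [Fintype α] (p q : α → Prop) :
    Nat.card {x // p x} = Nat.card {x // p x ∧ q x} + Nat.card {x // p x ∧ ¬ q x} := by
  classical
  simp only [Nat.card_eq_fintype_card, Fintype.card_subtype]
  rw [← Finset.filter_filter, ← Finset.filter_filter,
    Finset.card_filter_add_card_filter_not]

private lemma card_one18 {α : Type*} [Fintype α] (p : α → Prop) (a : α)
    (h : ∀ x, p x ↔ x = a) : Nat.card {x // p x} = 1 := by
  rw [Nat.card_eq_one_iff_unique]
  constructor
  · constructor
    rintro ⟨x, hx⟩ ⟨y, hy⟩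
    simp only [h] at hx hy
    subst hx; subst hy; rfl
  · exact ⟨⟨a, (h a).2 rfl⟩⟩

/-- Upper bound on the number `N` of `s × n` matrices over `F_q`
without zero columns all of whose rows lie in a `k`-dimensional linear code `A`:
`(q−1)·N ≤ q^{ks}·(q−1) − (q^s − 1)·(q^k − 1 − A_n) − (q−1)`. -/
theorem stmt_18 (F : Type*) [Field F] [Fintype F] [DecidableEq F]
    (s n k : ℕ) (hs : 1 ≤ s) (hn : 1 ≤ n) (hk : k ≤ n)
    (A : Submodule F (Fin n → F)) (hA : Module.finrank F A = k) :
    ((Fintype.card F : ℤ) - 1) *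
        (Nat.card {E : Matrix (Fin s) (Fin n) F //
          (∀ j, ∃ i, E i j ≠ 0) ∧ ∀ i, E i ∈ A} : ℤ) ≤
      (Fintype.card F : ℤ) ^ (k * s) * ((Fintype.card F : ℤ) - 1) -
        ((Fintype.card F : ℤ) ^ s - 1) *
          ((Fintype.card F : ℤ) ^ k - 1 -
            (Nat.card {c : Fin n → F // c ∈ A ∧ hammingNorm c = n} : ℤ)) -
        ((Fintype.card F : ℤ) - 1) := by
  classical
  set q : ℕ := Fintype.card F with hq
  -- basic predicates
  set P : Matrix (Fin s) (Fin n) F → Prop := fun E => ∀ i, E i ∈ A with hP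
  set Qp : Matrix (Fin s) (Fin n) F → Prop := fun E => ∀ j, ∃ i, E i j ≠ 0 with hQp
  -- cardinality of A
  have hcardA : Fintype.card A = q ^ k := by
    rw [Module.card_eq_pow_finrank (K := F) (V := A), hA]
  -- weight bound
  have hwle : ∀ c : Fin n → F, hammingNorm c ≤ n := fun c => by
    simpa using (hammingNorm_le_card_fintype (x := c))
  have hwn : ∀ c : Fin n → F, hammingNorm c = n → c ≠ 0 := by
    intro c hc h0
    rw [h0, hammingNorm_zero] at hc
    omega
  -- N, M', An, W
  set N : ℕ := Nat.card {E : Matrix (Fin s) (Fin n) F // Qp E ∧ P E} with hN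
  set An : ℕ := Nat.card {c : Fin n → F // c ∈ A ∧ hammingNorm c = n} with hAn
  set W : ℕ := Nat.card {c : Fin n → F // c ∈ A ∧ ¬ (hammingNorm c = n) ∧ c ≠ 0} with hW
  set M' : ℕ := Nat.card {E : Matrix (Fin s) (Fin n) F // (P E ∧ ¬ Qp E) ∧ ¬ (E = 0)} with hM'
  -- splitting the code A : q^k = An + W + 1
  have hsplitA : q ^ k = An + W + 1 := by
    have h0 : Nat.card {c : Fin n → F // c ∈ A} = q ^ k := by
      rw [Nat.card_eq_fintype_card, ← hcardA]
    have h1 := card_split18 (fun c : Fin n → F => c ∈ A) (fun c => hammingNorm c = n)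
    have h2 := card_split18 (fun c : Fin n → F => c ∈ A ∧ ¬ (hammingNorm c = n))
      (fun c => c = 0)
    have h3 : Nat.card {c : Fin n → F // (c ∈ A ∧ ¬ (hammingNorm c = n)) ∧ c = 0} = 1 := by
      apply card_one18 _ (0 : Fin n → F)
      intro x
      constructor
      · rintro ⟨-, hx⟩; exact hx
      · rintro rfl
        refine ⟨⟨A.zero_mem, ?_⟩, rfl⟩
        rw [hammingNorm_zero]; omega
    have h4 : Nat.card {c : Fin n → F // (c ∈ A ∧ ¬ (hammingNorm c = n)) ∧ ¬ (c = 0)} = W := by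
      rw [hW]
      exact Nat.card_congr (Equiv.subtypeEquivRight (by tauto))
    rw [h0, h2, h3, h4] at h1
    omega
  -- splitting matrices with all rows in A
  have hsplitM : q ^ (k * s) = N + M' + 1 := by
    have h0 : Nat.card {E : Matrix (Fin s) (Fin n) F // P E} = q ^ (k * s) := by
      rw [Nat.card_eq_fintype_card]
      have e : {E : Matrix (Fin s) (Fin n) F // P E} ≃ (Fin s → A) := by
        refine Equiv.subtypePiEquivPi (p := fun (_ : Fin s) (r : Fin n → F) => r ∈ A)
      rw [Fintype.card_congr e, Fintype.card_fun, hcardA, ← pow_mul]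
      simp [mul_comm]
    have h1 := card_split18 P Qp
    have h2 := card_split18 (fun E => P E ∧ ¬ Qp E) (fun E => E = (0 : Matrix (Fin s) (Fin n) F))
    have h3 : Nat.card {E : Matrix (Fin s) (Fin n) F // (P E ∧ ¬ Qp E) ∧ E = 0} = 1 := by
      apply card_one18 _ (0 : Matrix (Fin s) (Fin n) F)
      intro E
      constructor
      · rintro ⟨-, hE⟩; exact hE
      · rintro rfl
        refine ⟨⟨fun i => A.zero_mem, ?_⟩, rfl⟩
        intro h
        obtain ⟨i, hi⟩ := h ⟨0, hn⟩
        exact hi rfl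
    have h4 : Nat.card {E : Matrix (Fin s) (Fin n) F // P E ∧ Qp E} = N := by
      rw [hN]; exact Nat.card_congr (Equiv.subtypeEquivRight (by tauto))
    rw [h0, h4, h2, h3] at h1
    omega
  -- the injection
  have hinj : Nat.card {v : Fin s → F // v ≠ 0} * W ≤ Nat.card {a : F // a ≠ 0} * M' := by
    rw [hW, hM', ← Nat.card_prod, ← Nat.card_prod]
    have key : ∀ v : Fin s → F, v ≠ 0 → ({i | v i ≠ 0} : Finset (Fin s)).Nonempty := by
      intro v hv
      obtain ⟨i, hi⟩ := Function.ne_iff.1 hv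
      exact ⟨i, by simpa using hi⟩
    set i₀ : (v : Fin s → F) → v ≠ 0 → Fin s :=
      fun v hv => ({i | v i ≠ 0} : Finset (Fin s)).min' (key v hv) with hi₀
    have hi₀mem : ∀ (v : Fin s → F) (hv : v ≠ 0), v (i₀ v hv) ≠ 0 := by
      intro v hv
      have := Finset.min'_mem ({i | v i ≠ 0} : Finset (Fin s)) (key v hv)
      simpa using this
    apply Nat.card_le_card_of_injective
      (f := fun p : ({v : Fin s → F // v ≠ 0} ×
          {c : Fin n → F // c ∈ A ∧ ¬ (hammingNorm c = n) ∧ c ≠ 0}) =>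
        (⟨p.1.1 (i₀ p.1.1 p.1.2), hi₀mem p.1.1 p.1.2⟩,
         ⟨Matrix.of (fun i j => p.1.1 i * p.2.1 j), by
          obtain ⟨⟨v, hv⟩, ⟨c, hcA, hcn, hc0⟩⟩ := p
          have hwlt : hammingNorm c < n := lt_of_le_of_ne (hwle c) hcn
          have hzc : ∃ j, c j = 0 := by
            by_contra h
            push_neg at h
            have : hammingNorm c = n := by
              have : ({j | c j ≠ 0} : Finset (Fin n)) = Finset.univ := by
                ext j; simpa using h j
              simp only [hammingNorm, this, Finset.card_univ, Fintype.card_fin]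
            omega
          obtain ⟨j₀, hj₀⟩ := hzc
          obtain ⟨j₁, hj₁⟩ := Function.ne_iff.1 hc0
          refine ⟨⟨?_, ?_⟩, ?_⟩
          · intro i
            have : (Matrix.of (fun i j => v i * c j)) i = v i • c := by
              ext j; simp [Matrix.of_apply, smul_eq_mul]
            rw [this]
            exact A.smul_mem _ hcA
          · intro h
            obtain ⟨i, hi⟩ := h j₀
            simp [Matrix.of_apply, hj₀] at hi
          · intro h
            have := congrFun (congrFun h (i₀ v hv)) j₁
            simp only [Matrix.of_apply, Matrix.zero_apply] at this
            rcases mul_eq_zero.1 this with h' | h'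
            · exact hi₀mem v hv h'
            · exact hj₁ (by simpa using h')⟩))
    -- injectivity
    rintro ⟨⟨v, hv⟩, ⟨c, hcA, hcn, hc0⟩⟩ ⟨⟨v', hv'⟩, ⟨c', hcA', hcn', hc0'⟩⟩ heq
    simp only [Prod.mk.injEq, Subtype.mk.injEq] at heq
    obtain ⟨ha, hE⟩ := heq
    have hEfun : ∀ i j, v i * c j = v' i * c' j := by
      intro i j
      exact congrFun (congrFun hE i) j
    obtain ⟨j₁, hj₁⟩ := Function.ne_iff.1 hc0
    obtain ⟨j₁', hj₁'⟩ := Function.ne_iff.1 hc0'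
    simp only [Pi.zero_apply] at hj₁ hj₁'
    -- supports of v and v' agree
    have hsupp : ({i | v i ≠ 0} : Finset (Fin s)) = ({i | v' i ≠ 0} : Finset (Fin s)) := by
      ext i
      simp only [Finset.mem_filter, Finset.mem_univ, true_and, Set.mem_setOf_eq]
      simp only [ne_eq]
      constructor
      · intro hvi
        intro hvi'
        have := hEfun i j₁
        rw [hvi'] at this
        simp at this
        rcases this with h | h
        · exact hvi h
        · exact hj₁ h
      · intro hvi'
        intro hvi
        have := hEfun i j₁'
        rw [hvi] at this
        simp at this
        rcases this with h | h
        · exact hvi' h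
        · exact hj₁' h
    have hi0eq : i₀ v hv = i₀ v' hv' := by
      simp only [hi₀, hsupp]
    -- v (i₀) = v' (i₀)
    have hveq : v (i₀ v hv) = v' (i₀ v hv) := by
      rw [ha, hi0eq]
    have hv0 : v (i₀ v hv) ≠ 0 := hi₀mem v hv
    -- c = c'
    have hceq : c = c' := by
      ext j
      have h1 := hEfun (i₀ v hv) j
      rw [← hveq] at h1
      exact mul_left_cancel₀ hv0 h1
    -- v = v'
    have hvveq : v = v' := by
      ext i
      have h1 := hEfun i j₁
      rw [hceq] at h1
      exact mul_right_cancel₀ (hceq ▸ hj₁) h1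
    simp [hvveq, hceq]
  -- cardinalities of nonzero vectors
  have hcardv : Nat.card {v : Fin s → F // v ≠ 0} + 1 = q ^ s := by
    have h := card_split18 (fun _ : Fin s → F => True) (fun v => v = 0)
    have h0 : Nat.card {v : Fin s → F // True} = q ^ s := by
      rw [Nat.card_eq_fintype_card, Fintype.card_congr (Equiv.subtypeUnivEquiv fun _ => trivial),
        Fintype.card_fun]
      simp [hq]
    have h1 : Nat.card {v : Fin s → F // True ∧ v = 0} = 1 := by
      apply card_one18 _ (0 : Fin s → F); tauto
    have h2 : Nat.card {v : Fin s → F // True ∧ ¬ (v = 0)} =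
        Nat.card {v : Fin s → F // v ≠ 0} :=
      Nat.card_congr (Equiv.subtypeEquivRight (by tauto))
    rw [h0, h1, h2] at h
    omega
  have hcarda : Nat.card {a : F // a ≠ 0} + 1 = q := by
    have h := card_split18 (fun _ : F => True) (fun a => a = 0)
    have h0 : Nat.card {a : F // True} = q := by
      rw [Nat.card_eq_fintype_card, Fintype.card_congr (Equiv.subtypeUnivEquiv fun _ => trivial)]
    have h1 : Nat.card {a : F // True ∧ a = 0} = 1 := by
      apply card_one18 _ (0 : F); tauto
    have h2 : Nat.card {a : F // True ∧ ¬ (a = 0)} = Nat.card {a : F // a ≠ 0} :=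
      Nat.card_congr (Equiv.subtypeEquivRight (by tauto))
    rw [h0, h1, h2] at h
    omega
  -- now pure integer arithmetic
  have hQ1 : 1 ≤ q := Fintype.card_pos
  -- cast everything
  have c1 : ((q : ℤ)) ^ k = (An : ℤ) + W + 1 := by exact_mod_cast congrArg (Nat.cast (R := ℤ)) hsplitA
  have c2 : ((q : ℤ)) ^ (k * s) = (N : ℤ) + M' + 1 := by
    exact_mod_cast congrArg (Nat.cast (R := ℤ)) hsplitM
  have c3 : ((q : ℤ) ^ s - 1) * W ≤ ((q : ℤ) - 1) * M' := by
    have hv' : (Nat.card {v : Fin s → F // v ≠ 0} : ℤ) = (q : ℤ) ^ s - 1 := by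
      have := congrArg (Nat.cast (R := ℤ)) hcardv
      push_cast at this
      linarith
    have ha' : (Nat.card {a : F // a ≠ 0} : ℤ) = (q : ℤ) - 1 := by
      have := congrArg (Nat.cast (R := ℤ)) hcarda
      push_cast at this
      linarith
    calc ((q : ℤ) ^ s - 1) * W = (Nat.card {v : Fin s → F // v ≠ 0} : ℤ) * W := by rw [hv']
      _ ≤ (Nat.card {a : F // a ≠ 0} : ℤ) * M' := by exact_mod_cast hinj
      _ = ((q : ℤ) - 1) * M' := by rw [ha']
  -- the goal in terms of N, An
  show ((q : ℤ) - 1) * N ≤ (q : ℤ) ^ (k * s) * ((q : ℤ) - 1)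
      - ((q : ℤ) ^ s - 1) * ((q : ℤ) ^ k - 1 - An) - ((q : ℤ) - 1)
  have hNval : (N : ℤ) = (q : ℤ) ^ (k * s) - 1 - M' := by linarith
  have hWval : (q : ℤ) ^ k - 1 - An = W := by linarith
  rw [hNval, hWval]
  nlinarith [c3]
end

section
/- Let F be a finite field and K a finite extension field of F. Let s ≥ 1 and let t, d be integers with t < d ≤ 2t (so that 1 ≤ d − t ≤ t). Let α₁, …, α_t be distinct nonzero elements of K, and let H be the (d−t−1) × t matrix over K with entries H_{i,j} = α_j^{i−1} for 1 ≤ i ≤ d−t−1 and 1 ≤ j ≤ t (a parity-check matrix of the Reed–Solomon code of length t and minimum distance d−t with code locators α₁, …, α_t). Let E be an s × t matrix over F with no zero column. Then the following are equivalent: (i) there exists a nonzero vector e ∈ F^s such that at least d − t columns of E are F-scalar multiples of e; (ii) there exists a vector v ∈ K^t of Hamming weight exactly d − t such that H · diag(v) · Eᵀ = 0, where the entries of E are viewed in K via the inclusion F ⊆ K. -/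
/-!
On the support `S` of `v` (of size `d - t`), the equation `H · diag(v) · Eᵀ = 0` says that every
vector `(v_j E_{ij})_{j ∈ S}` lies in the kernel of the `(|S| - 1) × |S|` Vandermonde matrix on
the distinct points `α_j`. That kernel is spanned by the Lagrange nodal weights
`w_j = ∏_{j' ≠ j} (α_j - α_{j'})⁻¹`, all of them nonzero. So (ii) forces the columns of `E`
indexed by `S` to be proportional, and conversely `v_j = w_j / λ_j` works for columns `λ_j e`.
-/

open Matrix Finset Polynomial

section Vandermonde

variable {K : Type*} [Field K] {ι : Type*}

namespace Lagrange

theorem sum_nodalWeight_mul_pow_eq_zero [DecidableEq ι] {S : Finset ι} {α : ι → K}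
    (hα : Set.InjOn α S) {k : ℕ} (hk : k + 1 < #S) : ∑ j ∈ S, nodalWeight S α j * α j ^ k = 0 := by
  have hcoeff := coeff_eq_sum hα (P := (X : K[X]) ^ k)
    (by rw [degree_X_pow]; exact_mod_cast k.lt_succ_self.trans hk)
  rw [coeff_X_pow, if_neg (by omega)] at hcoeff
  rw [hcoeff]
  refine sum_congr rfl fun j _ => ?_
  rw [nodalWeight, prod_inv_distrib, eval_pow, eval_X, div_eq_mul_inv, mul_comm]

end Lagrange

theorem eq_zero_of_forall_sum_mul_pow_eq_zero {S : Finset ι} {α c : ι → K}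
    (hα : Set.InjOn α S) (hc : ∀ k < #S, ∑ j ∈ S, c j * α j ^ k = 0) : ∀ j ∈ S, c j = 0 := by
  let e : Fin #S ≃ S := S.equivFin.symm
  have hzero : (fun n => c (e n)) = 0 :=
    eq_zero_of_forall_pow_sum_mul_pow_eq_zero (f := fun n => α (e n))
      (fun a b hab => e.injective (Subtype.ext (hα (e a).2 (e b).2 hab))) fun k => by
        rw [← hc k k.isLt, ← S.sum_coe_sort]
        exact e.sum_comp fun j => c j * α j ^ (k : ℕ)
  intro j hj
  simpa [e] using congrFun hzero (S.equivFin ⟨j, hj⟩)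

/-- The kernel of the `(#S - 1)`-row Vandermonde matrix on `S` is one-dimensional. -/
theorem mul_eq_mul_of_forall_sum_mul_pow_eq_zero [DecidableEq ι] {S : Finset ι} {α x y : ι → K}
    (hα : Set.InjOn α S) (hx : ∀ k, k + 1 < #S → ∑ j ∈ S, x j * α j ^ k = 0)
    (hy : ∀ k, k + 1 < #S → ∑ j ∈ S, y j * α j ^ k = 0) {j₀ : ι} (hj₀ : j₀ ∈ S) :
    ∀ j ∈ S, x j₀ * y j = y j₀ * x j := by
  have hzero := eq_zero_of_forall_sum_mul_pow_eq_zero (S := S.erase j₀)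
    (c := fun j => x j₀ * y j - y j₀ * x j) (hα.mono (erase_subset _ _)) fun k hk => by
      rw [card_erase_of_mem hj₀] at hk
      rw [sum_erase _ (by ring)]
      simp only [sub_mul, mul_assoc, sum_sub_distrib, ← mul_sum, hx k (by omega),
        hy k (by omega), mul_zero, sub_zero]
  intro j hj
  rcases eq_or_ne j j₀ with rfl | hne
  · ring
  · exact sub_eq_zero.mp (hzero j (mem_erase.mpr ⟨hne, hj⟩))

theorem exists_eq_mul_of_mul_eq_mul {σ F : Type*} [Field F] {x y : σ → F} {i₀ : σ}
    (hx : x i₀ ≠ 0) (hxy : ∀ i, x i₀ * y i = x i * y i₀) : ∃ l : F, ∀ i, y i = l * x i :=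
  ⟨y i₀ / x i₀, fun i => by field_simp; linear_combination hxy i⟩

variable {σ : Type*} [Fintype ι] [DecidableEq ι]

theorem pow_mul_diagonal_mul_transpose_eq_zero_iff {r : ℕ} (α v : ι → K) (B : Matrix σ ι K) :
    (of fun (k : Fin r) j => α j ^ (k : ℕ)) * diagonal v * Bᵀ = 0 ↔
      ∀ i, ∀ k < r, ∑ j, v j * B i j * α j ^ k = 0 := by
  have hentry : ∀ (k : Fin r) i,
      ((of fun (k : Fin r) j => α j ^ (k : ℕ)) * diagonal v * Bᵀ) k i =
        ∑ j, v j * B i j * α j ^ (k : ℕ) := fun k i => by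
    rw [mul_apply]
    exact sum_congr rfl fun j _ => by rw [mul_diagonal, of_apply, transpose_apply]; ring
  simp only [← ext_iff, hentry, Matrix.zero_apply]
  exact ⟨fun h i k hk => h ⟨k, hk⟩ i, fun h k i => h i k k.isLt⟩

theorem exists_hammingNorm_eq_card_and_sum_mul_pow_eq_zero [DecidableEq K] {S : Finset ι}
    {α : ι → K} (hα : Set.InjOn α S) {B : Matrix σ ι K} {c : ι → K} {e : σ → K}
    (hc : ∀ j ∈ S, c j ≠ 0) (hB : ∀ j ∈ S, ∀ i, B i j = c j * e i) :
    ∃ v : ι → K, hammingNorm v = #S ∧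
      ∀ i, ∀ k, k + 1 < #S → ∑ j, v j * B i j * α j ^ k = 0 := by
  set v : ι → K := fun j => if j ∈ S then Lagrange.nodalWeight S α j / c j else 0
  have hv : ∀ j, v j ≠ 0 ↔ j ∈ S := fun j => by
    by_cases hj : j ∈ S
    · simp [v, hj, Lagrange.nodalWeight_ne_zero hα hj, hc j hj]
    · simp [v, hj]
  refine ⟨v, by simp only [hammingNorm, hv, filter_mem_eq_inter, univ_inter], fun i k hk => ?_⟩
  calc ∑ j, v j * B i j * α j ^ k
      = ∑ j ∈ S, e i * (Lagrange.nodalWeight S α j * α j ^ k) := by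
        rw [← sum_subset (subset_univ S) fun j _ hj => by simp [v, hj]]
        refine sum_congr rfl fun j hj => ?_
        have hcj := hc j hj
        simp only [v, if_pos hj, hB j hj]
        field_simp
    _ = 0 := by rw [← mul_sum, Lagrange.sum_nodalWeight_mul_pow_eq_zero hα hk, mul_zero]

theorem mul_eq_mul_of_forall_sum_mul_mul_pow_eq_zero [DecidableEq K] {α v : ι → K}
    (hα : Function.Injective α) {B : Matrix σ ι K}
    (hB : ∀ i, ∀ k, k + 1 < hammingNorm v → ∑ j, v j * B i j * α j ^ k = 0)
    {j₀ j : ι} (hj₀ : v j₀ ≠ 0) (hj : v j ≠ 0) (i₀ i : σ) :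
    B i₀ j₀ * B i j = B i j₀ * B i₀ j := by
  have hrow : ∀ i k, k + 1 < #{j | v j ≠ 0} →
      ∑ j ∈ {j | v j ≠ 0}, v j * B i j * α j ^ k = 0 := fun i k hk => by
    rw [sum_filter_of_ne fun j _ hne => by contrapose! hne; simp [hne]]
    exact hB i k hk
  have hprop := mul_eq_mul_of_forall_sum_mul_pow_eq_zero hα.injOn (hrow i₀) (hrow i)
    (mem_filter.mpr ⟨mem_univ _, hj₀⟩) j (mem_filter.mpr ⟨mem_univ _, hj⟩)
  apply mul_left_cancel₀ (mul_ne_zero hj₀ hj)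
  linear_combination hprop

end Vandermonde

theorem stmt_19_general (F K : Type*) [Field F] [Field K] [Algebra F K]
    [DecidableEq K]
    (s t d : ℕ) (htd : t < d)
    (α : Fin t → K) (hinj : Function.Injective α)
    (E : Matrix (Fin s) (Fin t) F) (hE : ∀ j, ∃ i, E i j ≠ 0) :
    (∃ e : Fin s → F, e ≠ 0 ∧
        d - t ≤ Nat.card {j : Fin t // ∃ l : F, ∀ i, E i j = l * e i}) ↔
      ∃ v : Fin t → K, hammingNorm v = d - t ∧
        (Matrix.of fun (i : Fin (d - t - 1)) (j : Fin t) => α j ^ (i : ℕ)) *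
            Matrix.diagonal v *
            (Matrix.of fun (i : Fin s) (j : Fin t) => algebraMap F K (E i j))ᵀ = 0 := by
  classical
  simp only [pow_mul_diagonal_mul_transpose_eq_zero_iff, of_apply, Nat.card_eq_fintype_card,
    Fintype.card_subtype]
  constructor
  · rintro ⟨e, -, hcard⟩
    obtain ⟨S, hS, hScard⟩ := exists_subset_card_eq hcard
    choose! l hl using fun j (hj : j ∈ S) => (mem_filter.mp (hS hj)).2
    have hl0 : ∀ j ∈ S, l j ≠ 0 := fun j hj h0 =>
      (hE j).elim fun i hi => hi (by rw [hl j hj i, h0, zero_mul])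
    obtain ⟨v, hv, hsum⟩ := exists_hammingNorm_eq_card_and_sum_mul_pow_eq_zero hinj.injOn
      (B := of fun i j => algebraMap F K (E i j)) (c := fun j => algebraMap F K (l j))
      (e := fun i => algebraMap F K (e i)) (fun j hj => by simpa using hl0 j hj)
      fun j hj i => by simp [hl j hj i]
    exact ⟨v, hv.trans hScard, fun i k hk => hsum i k (by omega)⟩
  · rintro ⟨v, hv, hsum⟩
    obtain ⟨j₀, hj₀⟩ := Function.ne_iff.mp (hammingNorm_pos_iff.mp (by omega : 0 < hammingNorm v))
    obtain ⟨i₀, hi₀⟩ := hE j₀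
    refine ⟨fun i => E i j₀, fun h => hi₀ (congrFun h i₀), hv ▸ card_le_card fun j hj => ?_⟩
    refine mem_filter.mpr ⟨mem_univ j, exists_eq_mul_of_mul_eq_mul hi₀ fun i =>
      (algebraMap F K).injective ?_⟩
    simpa [mul_comm] using mul_eq_mul_of_forall_sum_mul_mul_pow_eq_zero hinj
      (fun i k hk => hsum i k (by omega)) hj₀ (mem_filter.mp hj).2 i₀ i

/-- For an `s × t` matrix `E` over `F ⊆ K` with no zero column, and `H`
the Vandermonde-type parity-check matrix of the Reed–Solomon code with distinct nonzero
code locators `α₁, …, α_t ∈ K` and minimum distance `d − t`, the following are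
equivalent: (i) some nonzero `e ∈ F^s` is such that at least `d − t` columns of `E` are
`F`-scalar multiples of `e`; (ii) some `v ∈ K^t` of Hamming weight exactly `d − t`
satisfies `H · diag(v) · Eᵀ = 0`. -/
theorem stmt_19 (F K : Type*) [Field F] [Field K] [Algebra F K]
    [Fintype F] [Fintype K] [DecidableEq K]
    (s t d : ℕ) (hs : 1 ≤ s) (htd : t < d) (hd2 : d ≤ 2 * t)
    (α : Fin t → K) (hinj : Function.Injective α) (hne : ∀ j, α j ≠ 0)
    (E : Matrix (Fin s) (Fin t) F) (hE : ∀ j, ∃ i, E i j ≠ 0) :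
    (∃ e : Fin s → F, e ≠ 0 ∧
        d - t ≤ Nat.card {j : Fin t // ∃ l : F, ∀ i, E i j = l * e i}) ↔
      ∃ v : Fin t → K, hammingNorm v = d - t ∧
        (Matrix.of fun (i : Fin (d - t - 1)) (j : Fin t) => α j ^ (i : ℕ)) *
            Matrix.diagonal v *
            (Matrix.of fun (i : Fin s) (j : Fin t) => algebraMap F K (E i j))ᵀ = 0 :=
  stmt_19_general F K s t d htd α hinj E hE
end
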